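/- arXiv:1304.7296 — 7 statements merged into one kernel-verified Lean document; each statement's English description precedes it below -/
import Mathlib

section
/- Let d ≥ 1, Λ = ℤ^d + ℤ·(1/2,…,1/2), and Δ the standard d-simplex. If k < d/2 then kΔ contains no d-simplex with vertices in Λ of normalized volume 1 with respect to Λ (i.e., no unimodular simplex); in particular kΔ admits no unimodular triangulation with respect to Λ. -/
open Pointwise

/-- For `Λ = ℤ^d + ℤ·(1/2,…,1/2)` and `Δ` the standard `d`-simplex,
if `k < d/2` then `kΔ` contains no unimodular `d`-simplex with respect to `Λ`
(a simplex with vertices `v 0, …, v d` in `Λ` is unimodular when the difference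
vectors `v i - v 0` span `Λ` over `ℤ`, i.e. form a basis of the lattice `Λ`). -/
theorem no_unimodular_simplex_in_dilated_simplex
    (d : ℕ) (hd : 1 ≤ d) (k : ℕ) (hk : 0 < k) (hkd : (k : ℝ) < d / 2) :
    ¬ ∃ v : Fin (d + 1) → (Fin d → ℝ),
      (∀ i, v i ∈ {x : Fin d → ℝ | ∃ (n : Fin d → ℤ) (m : ℤ), ∀ j, x j = n j + m / 2}) ∧
      (∀ i, v i ∈ (k : ℝ) •
        convexHull ℝ (insert 0 (Set.range fun i : Fin d => Pi.single i (1 : ℝ)))) ∧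
      AffineIndependent ℝ v ∧
      (Submodule.span ℤ (Set.range fun i : Fin d => v i.succ - v 0) : Set (Fin d → ℝ)) =
        {x : Fin d → ℝ | ∃ (n : Fin d → ℤ) (m : ℤ), ∀ j, x j = n j + m / 2} := by
  rintro ⟨v, hΛ, hΔ, -, hspan⟩
  -- The simplex kΔ is contained in {x | ∀ j, 0 ≤ x j ∧ ∑ x j ≤ k}
  set C : Set (Fin d → ℝ) := {x | (∀ j, 0 ≤ x j) ∧ ∑ j, x j ≤ 1} with hC
  have hconv : Convex ℝ C := by
    rintro x ⟨hx0, hx1⟩ y ⟨hy0, hy1⟩ a b ha hb hab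
    constructor
    · intro j
      have : (a • x + b • y) j = a * x j + b * y j := rfl
      rw [this]
      have := hx0 j; have := hy0 j
      positivity
    · have : ∑ j, (a • x + b • y) j = a * ∑ j, x j + b * ∑ j, y j := by
        simp [Finset.sum_add_distrib, Finset.mul_sum]
      rw [this]
      nlinarith
  have hsub : insert (0 : Fin d → ℝ) (Set.range fun i : Fin d => Pi.single i (1 : ℝ)) ⊆ C := by
    rintro x (rfl | ⟨i, rfl⟩)
    · exact ⟨fun j => le_refl 0, by simp⟩
    · refine ⟨fun j => ?_, ?_⟩
      · by_cases h : j = i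
        · subst h; simp
        · simp [Pi.single_apply, h]
      · simp [Finset.sum_pi_single]
  have hbound : ∀ i, (∀ j, 0 ≤ v i j) ∧ ∑ j, v i j ≤ (k : ℝ) := by
    intro i
    obtain ⟨y, hy, hvy⟩ := hΔ i
    have hyC : y ∈ C := convexHull_min hsub hconv hy
    constructor
    · intro j
      have : v i j = (k : ℝ) * y j := by rw [← hvy]; rfl
      rw [this]
      exact mul_nonneg (by positivity) (hyC.1 j)
    · have : ∑ j, v i j = (k : ℝ) * ∑ j, y j := by
        rw [← hvy]; simp [Pi.smul_apply, smul_eq_mul, Finset.mul_sum]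
      rw [this]
      calc (k : ℝ) * ∑ j, y j ≤ (k : ℝ) * 1 :=
            mul_le_mul_of_nonneg_left hyC.2 (by positivity)
        _ = k := mul_one _
  -- each vertex is integral
  have hint : ∀ i j, ∃ n : ℤ, v i j = n := by
    intro i j
    obtain ⟨n, m, hnm⟩ := hΛ i
    obtain ⟨m', rfl | rfl⟩ := m.even_or_odd'
    · exact ⟨n j + m', by rw [hnm j]; push_cast; ring⟩
    · exfalso
      -- all coordinates ≥ 1/2
      have hhalf : ∀ j', (1:ℝ)/2 ≤ v i j' := by
        intro j'
        have h0 := (hbound i).1 j'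
        have : v i j' = (n j' + m' : ℤ) + 1/2 := by rw [hnm j']; push_cast; ring
        rw [this] at h0 ⊢
        have : (0:ℝ) ≤ ((n j' + m' : ℤ) : ℝ) := by
          have h3 : (0 : ℤ) ≤ n j' + m' := by
            by_contra h
            push_neg at h
            have h4 : n j' + m' ≤ -1 := by omega
            have h5 : ((n j' + m' : ℤ) : ℝ) ≤ -1 := by exact_mod_cast h4
            linarith
          exact_mod_cast h3
        linarith
      have hsum : (d : ℝ) * (1/2) ≤ ∑ j', v i j' := by
        calc (d : ℝ) * (1/2) = ∑ _j' : Fin d, (1:ℝ)/2 := by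
              simp [Finset.sum_const, mul_comm]
          _ ≤ ∑ j', v i j' := Finset.sum_le_sum fun j' _ => hhalf j'
      have := (hbound i).2
      linarith
  -- the integer lattice as a ℤ-submodule
  let M : Submodule ℤ (Fin d → ℝ) :=
    { carrier := {x | ∀ j, ∃ n : ℤ, x j = n}
      add_mem' := by
        rintro x y hx hy j
        obtain ⟨n, hn⟩ := hx j; obtain ⟨m, hm⟩ := hy j
        exact ⟨n + m, by simp [hn, hm]⟩
      zero_mem' := fun j => ⟨0, by simp⟩
      smul_mem' := by
        rintro c x hx j
        obtain ⟨n, hn⟩ := hx j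
        exact ⟨c * n, by simp [Pi.smul_apply, hn, zsmul_eq_mul]⟩ }
  have hle : Submodule.span ℤ (Set.range fun i : Fin d => v i.succ - v 0) ≤ M := by
    rw [Submodule.span_le]
    rintro x ⟨i, rfl⟩ j
    obtain ⟨n, hn⟩ := hint i.succ j
    obtain ⟨m, hm⟩ := hint 0 j
    exact ⟨n - m, by simp [hn, hm]⟩
  -- but (1/2,…,1/2) ∈ Λ = span
  have hw : (fun _ : Fin d => (1:ℝ)/2) ∈
      (Submodule.span ℤ (Set.range fun i : Fin d => v i.succ - v 0) : Set (Fin d → ℝ)) := by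
    rw [hspan]
    exact ⟨0, 1, fun j => by norm_num⟩
  obtain ⟨n, hn⟩ := hle hw ⟨0, hd⟩
  have : (2 * n : ℤ) = 1 := by
    have : (2 * n : ℝ) = 1 := by linarith [hn]
    exact_mod_cast this
  omega
end

section
/- For coprime positive integers p, q with 0 < p < q, the tetrahedron Δ(p,q) = conv{(0,0,0),(1,0,0),(0,0,1),(p,q,1)} ⊂ ℝ³ is empty with respect to ℤ³: the only points of ℤ³ contained in Δ(p,q) are its four vertices. -/
lemma hull_ineq (c0 c1 c2 r : ℝ) (S : Set (Fin 3 → ℝ))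
    (h : ∀ v ∈ S, c0 * v 0 + c1 * v 1 + c2 * v 2 ≤ r) :
    ∀ y ∈ convexHull ℝ S, c0 * y 0 + c1 * y 1 + c2 * y 2 ≤ r := by
  have hlin : IsLinearMap ℝ (fun v : Fin 3 → ℝ => c0 * v 0 + c1 * v 1 + c2 * v 2) := by
    constructor
    · intro a b; simp [Pi.add_apply]; ring
    · intro m a; simp [Pi.smul_apply, smul_eq_mul]; ring
  exact fun y hy => convexHull_min h (convex_halfSpace_le hlin r) hy

/-- For coprime `0 < p < q`, the tetrahedron
`Δ(p,q) = conv{(0,0,0),(1,0,0),(0,0,1),(p,q,1)}` is empty: the only integer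
points it contains are its four vertices. -/
theorem delta_pq_is_empty
    (p q : ℤ) (hp : 0 < p) (hpq : p < q) (hco : IsCoprime p q)
    (x : Fin 3 → ℤ)
    (hx : (fun i => (x i : ℝ)) ∈ convexHull ℝ
      ({![0,0,0], ![1,0,0], ![0,0,1], ![(p : ℝ), (q : ℝ), 1]} : Set (Fin 3 → ℝ))) :
    x = ![0,0,0] ∨ x = ![1,0,0] ∨ x = ![0,0,1] ∨ x = ![p, q, 1] := by
  have hq : (0:ℤ) < q := lt_trans hp hpq
  set S : Set (Fin 3 → ℝ) := {![0,0,0], ![1,0,0], ![0,0,1], ![(p : ℝ), (q : ℝ), 1]}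
  -- four valid inequalities on the vertex set
  have hqR : (0:ℝ) < q := by exact_mod_cast hq
  have hpR : (0:ℝ) < p := by exact_mod_cast hp
  have key : ∀ (c0 c1 c2 r : ℝ),
      (0 ≤ r) → (c0 ≤ r) → (c2 ≤ r) →
      (c0 * p + c1 * q + c2 ≤ r) →
      c0 * (x 0 : ℝ) + c1 * (x 1 : ℝ) + c2 * (x 2 : ℝ) ≤ r := by
    intro c0 c1 c2 r hA hB hC hD
    have := hull_ineq c0 c1 c2 r S (by
      rintro v (rfl | rfl | rfl | rfl) <;>
        simp [Matrix.cons_val_zero, Matrix.cons_val_one, Matrix.head_cons] <;>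
        linarith) _ hx
    simpa using this
  have h1 : (0:ℤ) ≤ x 1 := by
    have := key 0 (-1) 0 0 le_rfl le_rfl le_rfl (by linarith)
    have : -(x 1 : ℝ) ≤ 0 := by linarith [this]
    exact_mod_cast neg_nonpos.mp this
  have h2 : x 1 ≤ q * x 2 := by
    have := key 0 1 (-(q:ℝ)) 0 le_rfl (by norm_num) (by linarith)
      (by nlinarith)
    have h : (x 1 : ℝ) - (q:ℝ) * (x 2 : ℝ) ≤ 0 := by linarith [this]
    have : (x 1 : ℝ) ≤ (q:ℝ) * (x 2 : ℝ) := by linarith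
    exact_mod_cast this
  have h3 : p * x 1 ≤ q * x 0 := by
    have := key (-(q:ℝ)) (p:ℝ) 0 0 le_rfl (by linarith) le_rfl
      (by nlinarith)
    have : (p:ℝ) * (x 1 : ℝ) ≤ (q:ℝ) * (x 0 : ℝ) := by linarith [this]
    exact_mod_cast this
  have h4 : q * x 0 - p * x 1 + q * x 2 ≤ q := by
    have := key (q:ℝ) (-(p:ℝ)) (q:ℝ) (q:ℝ) (by linarith) le_rfl le_rfl
      (by nlinarith)
    have : (q:ℝ) * (x 0 : ℝ) - (p:ℝ) * (x 1 : ℝ) + (q:ℝ) * (x 2 : ℝ) ≤ (q:ℝ) := by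
      linarith [this]
    exact_mod_cast this
  -- integer argument
  have hz0 : 0 ≤ x 2 := by nlinarith
  have hz1 : x 2 ≤ 1 := by nlinarith
  have hz : x 2 = 0 ∨ x 2 = 1 := by omega
  rcases hz with hz | hz
  · -- bottom edge: x 1 = 0, x 0 ∈ {0,1}
    have hy0 : x 1 = 0 := by rw [hz] at h2; omega
    have hx0l : 0 ≤ x 0 := by rw [hy0] at h3; nlinarith
    have hx0r : x 0 ≤ 1 := by rw [hz, hy0] at h4; nlinarith
    have : x 0 = 0 ∨ x 0 = 1 := by omega
    rcases this with h | h
    · left; funext i; fin_cases i <;> simp [h, hy0, hz]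
    · right; left; funext i; fin_cases i <;> simp [h, hy0, hz]
  · -- top edge: q * x 0 = p * x 1
    rw [hz] at h2 h4
    have heq : q * x 0 = p * x 1 := by omega
    have hdvd : q ∣ x 1 := (hco.symm).dvd_of_dvd_mul_left ⟨x 0, heq.symm⟩
    obtain ⟨k, hk⟩ := hdvd
    have hk0 : 0 ≤ k := by by_contra h; push_neg at h; nlinarith
    have hk1 : k ≤ 1 := by by_contra h; push_neg at h; nlinarith
    have : k = 0 ∨ k = 1 := by omega
    rcases this with h | h
    · have hy0 : x 1 = 0 := by rw [hk, h, mul_zero]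
      have hx0 : x 0 = 0 := by
        have : q * x 0 = 0 := by rw [heq, hy0, mul_zero]
        exact (mul_eq_zero.mp this).resolve_left (by omega)
      right; right; left; funext i; fin_cases i <;> simp [hx0, hy0, hz]
    · have hy0 : x 1 = q := by rw [hk, h, mul_one]
      have hx0 : x 0 = p := by
        have : q * x 0 = q * p := by rw [heq, hy0]; ring
        exact mul_left_cancel₀ (by omega) this
      right; right; right; funext i; fin_cases i <;> simp [hx0, hy0, hz]
end

section
/- Let 0 < p < q be coprime and Λ_{p,q} = qℤ × qℤ × ℤ + ℤ·((−p) mod q, 1, 0). The set of points of Λ_{p,q} contained in the dilated tetrahedron 2Δ′(p,q), where Δ′(p,q) = conv{(0,0,0),(q,0,0),(0,0,1),(0,q,1)}, consists of: the four vertices (0,0,0),(2q,0,0),(0,0,2),(0,2q,2); the six edge midpoints; and the q−1 points (i·p′ mod q, i, 1) for 1 ≤ i ≤ q−1, where p′ = (−p) mod q. In total 2Δ′(p,q) contains q+9 lattice points. -/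
/-!
In coordinates `(u, v, c) ∈ ℤ³`, membership in `Λ_{p,q}` is the congruence `u ≡ p' v (mod q)`,
and `2Δ'(p,q)` is cut out by `0 ≤ u`, `0 ≤ v ≤ q c`, `u + q c ≤ 2 q`; hence `c ∈ {0, 1, 2}`.
Since `p'` is a unit mod `q`, the congruence gives `q ∣ u ↔ q ∣ v`. On the levels `c = 0` and
`c = 2` one of `u`, `v` vanishes, so the other is `0`, `q` or `2q`. On `c = 1` we have
`0 ≤ u, v ≤ q`; for `v ∈ {0, q}` this forces `u ∈ {0, q}`, and for `0 < v < q` it forces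
`0 < u < q`, i.e. `u = p' v mod q`.
-/

open Finset

lemma mem_convexHull_twoDilatedTetrahedron_iff {q : ℝ} (hq : 0 < q) (x : Fin 3 → ℝ) :
    x ∈ convexHull ℝ ({![0,0,0], ![2*q,0,0], ![0,0,2], ![0,2*q,2]} : Set (Fin 3 → ℝ)) ↔
      0 ≤ x 0 ∧ 0 ≤ x 1 ∧ x 1 ≤ q * x 2 ∧ x 0 + q * x 2 ≤ 2 * q := by
  constructor
  · suffices convexHull ℝ _ ⊆
        {y : Fin 3 → ℝ | 0 ≤ y 0 ∧ 0 ≤ y 1 ∧ y 1 ≤ q * y 2 ∧ y 0 + q * y 2 ≤ 2 * q} from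
      fun hx => this hx
    refine convexHull_min ?_ fun u hu v hv a b ha hb hab => ?_
    · rintro y (rfl | rfl | rfl | rfl) <;> refine ⟨?_, ?_, ?_, ?_⟩ <;>
        simp only [Matrix.cons_val] <;> linarith
    · simp only [Set.mem_ofPred_eq, Pi.add_apply, Pi.smul_apply, smul_eq_mul] at *
      refine ⟨by nlinarith, by nlinarith, by nlinarith, by nlinarith⟩
  · rintro ⟨h0, h1, h2, h3⟩
    obtain ⟨α, hx0⟩ : ∃ α, x 0 = 2 * q * α := ⟨x 0 / (2 * q), by field_simp⟩
    obtain ⟨β, hx1⟩ : ∃ β, x 1 = 2 * q * β := ⟨x 1 / (2 * q), by field_simp⟩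
    obtain ⟨γ, hx2⟩ : ∃ γ, x 2 = 2 * γ := ⟨x 2 / 2, by field_simp⟩
    simp only [hx0, hx1, hx2] at h0 h1 h2 h3
    have hα : 0 ≤ α := by nlinarith
    have hβ : 0 ≤ β := by nlinarith
    have hβγ : β ≤ γ := by nlinarith
    have hαγ : α + γ ≤ 1 := by nlinarith
    let w : Fin 4 → ℝ := ![1 - α - γ, α, γ - β, β]
    let v : Fin 4 → Fin 3 → ℝ := ![![0,0,0], ![2*q,0,0], ![0,0,2], ![0,2*q,2]]
    have hsum : ∑ i, w i • v i = x := by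
      ext j
      fin_cases j <;>
        simp only [w, v, Fin.sum_univ_four, Finset.sum_apply, Pi.smul_apply, smul_eq_mul,
          Matrix.cons_val, Fin.zero_eta, Fin.mk_one, Fin.reduceFinMk, hx0, hx1, hx2] <;> ring
    rw [← hsum]
    refine (convex_convexHull ℝ _).sum_mem (fun i _ => ?_) ?_ (fun i _ => subset_convexHull ℝ _ ?_)
    · fin_cases i <;>
        simp only [w, Matrix.cons_val, Fin.zero_eta, Fin.mk_one, Fin.reduceFinMk] <;> linarith
    · simp only [w, Fin.sum_univ_four, Matrix.cons_val]; ring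
    · fin_cases i <;> simp [v]

def intPoint (t : ℤ × ℤ × ℤ) : Fin 3 → ℝ := ![t.1, t.2.1, t.2.2]

lemma intPoint_injective : Function.Injective intPoint := fun _ _ h =>
  Prod.ext (by simpa [intPoint] using congrFun h 0)
    (Prod.ext (by simpa [intPoint] using congrFun h 1) (by simpa [intPoint] using congrFun h 2))

lemma intPoint_mem_convexHull_iff {q : ℤ} (hq : 0 < q) (t : ℤ × ℤ × ℤ) :
    intPoint t ∈ convexHull ℝ
        ({![0,0,0], ![2*(q : ℝ),0,0], ![0,0,2], ![0,2*(q : ℝ),2]} : Set (Fin 3 → ℝ)) ↔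
      0 ≤ t.1 ∧ 0 ≤ t.2.1 ∧ t.2.1 ≤ q * t.2.2 ∧ t.1 + q * t.2.2 ≤ 2 * q := by
  rw [mem_convexHull_twoDilatedTetrahedron_iff (by exact_mod_cast hq)]
  simp only [intPoint, Matrix.cons_val_zero, Matrix.cons_val_one, Matrix.cons_val_two,
    Matrix.head_cons, Matrix.tail_cons]
  norm_cast

lemma exists_lattice_repr_iff (q r : ℤ) (x : Fin 3 → ℝ) :
    (∃ a b c m : ℤ, x = ![(q : ℝ) * a + m * r, (q : ℝ) * b + m, (c : ℝ)]) ↔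
      ∃ t : ℤ × ℤ × ℤ, t.1 ≡ r * t.2.1 [ZMOD q] ∧ intPoint t = x := by
  constructor
  · rintro ⟨a, b, c, m, rfl⟩
    refine ⟨(q * a + m * r, q * b + m, c), (Int.modEq_iff_dvd.2 ⟨a - r * b, by ring⟩).symm, ?_⟩
    simp [intPoint]
  · rintro ⟨⟨u, v, c⟩, hmod, rfl⟩
    obtain ⟨k, hk⟩ := Int.modEq_iff_dvd.1 hmod
    have hu : u = q * -k + v * r := by dsimp only at hk; linarith
    refine ⟨-k, 0, c, v, ?_⟩
    simp [intPoint, hu]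

lemma IsCoprime.neg_emod_left {p q : ℤ} (h : IsCoprime p q) : IsCoprime ((-p) % q) q := by
  rwa [Int.emod_def, IsCoprime.sub_mul_left_left_iff, IsCoprime.neg_left_iff]

lemma Int.ModEq.dvd_iff_dvd_of_isCoprime {q r u v : ℤ} (hr : IsCoprime r q)
    (h : u ≡ r * v [ZMOD q]) : q ∣ u ↔ q ∣ v :=
  h.dvd_iff.trans ⟨hr.symm.dvd_of_dvd_mul_left, (Dvd.dvd.mul_left · r)⟩

lemma Int.eq_zero_or_eq_or_eq_two_mul_of_dvd {q u : ℤ} (hq : 0 < q) (h : q ∣ u) (h0 : 0 ≤ u)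
    (h2 : u ≤ 2 * q) : u = 0 ∨ u = q ∨ u = 2 * q := by
  obtain ⟨k, rfl⟩ := h
  have : 0 ≤ k := by nlinarith
  have : k ≤ 2 := by nlinarith
  interval_cases k <;> omega

/-- `Λ_{p,q} ∩ 2Δ'(p,q)` in coordinates `(u, v, c)`, with `r = (-p) mod q`. -/
def latticePointsInTwoTetrahedron (q r : ℤ) : Set (ℤ × ℤ × ℤ) :=
  {t | t.1 ≡ r * t.2.1 [ZMOD q] ∧ 0 ≤ t.1 ∧ 0 ≤ t.2.1 ∧ t.2.1 ≤ q * t.2.2 ∧ t.1 + q * t.2.2 ≤ 2 * q}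

def tetrahedronVertices (q : ℤ) : Finset (ℤ × ℤ × ℤ) :=
  {(0, 0, 0), (2 * q, 0, 0), (0, 0, 2), (0, 2 * q, 2)}

def tetrahedronEdgeMidpoints (q : ℤ) : Finset (ℤ × ℤ × ℤ) :=
  {(q, 0, 0), (0, 0, 1), (0, q, 1), (q, 0, 1), (q, q, 1), (0, q, 2)}

noncomputable def interiorLevelOnePoints (q r : ℤ) : Finset (ℤ × ℤ × ℤ) :=
  (Icc 1 (q - 1)).image fun i => (i * r % q, i, 1)

noncomputable def twoTetrahedronPoints (q r : ℤ) : Finset (ℤ × ℤ × ℤ) :=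
  tetrahedronVertices q ∪ tetrahedronEdgeMidpoints q ∪ interiorLevelOnePoints q r

lemma setOf_lattice_mem_convexHull_eq_image {q r : ℤ} (hq : 0 < q) :
    {x : Fin 3 → ℝ | (∃ a b c m : ℤ, x = ![(q : ℝ) * a + m * r, (q : ℝ) * b + m, (c : ℝ)]) ∧
        x ∈ convexHull ℝ
          ({![0,0,0], ![2*(q : ℝ),0,0], ![0,0,2], ![0,2*(q : ℝ),2]} : Set (Fin 3 → ℝ))} =
      intPoint '' latticePointsInTwoTetrahedron q r := by
  ext x
  rw [Set.mem_ofPred_eq, exists_lattice_repr_iff]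
  constructor
  · rintro ⟨⟨t, hmod, rfl⟩, hx⟩
    exact ⟨t, ⟨hmod, (intPoint_mem_convexHull_iff hq t).1 hx⟩, rfl⟩
  · rintro ⟨t, ⟨hmod, ht⟩, rfl⟩
    exact ⟨⟨t, hmod, rfl⟩, (intPoint_mem_convexHull_iff hq t).2 ht⟩

lemma image_intPoint_twoTetrahedronPoints (q r : ℤ) :
    intPoint '' ↑(twoTetrahedronPoints q r) =
      ({![0,0,0], ![2*(q : ℝ),0,0], ![0,0,2], ![0,2*(q : ℝ),2]} : Set (Fin 3 → ℝ)) ∪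
      ({![(q : ℝ),0,0], ![0,0,1], ![0,(q : ℝ),1], ![(q : ℝ),0,1], ![(q : ℝ),(q : ℝ),1],
        ![0,(q : ℝ),2]} : Set (Fin 3 → ℝ)) ∪
      {x : Fin 3 → ℝ | ∃ i : ℤ, 1 ≤ i ∧ i ≤ q - 1 ∧
        x = ![(((i * r) % q : ℤ) : ℝ), (i : ℝ), 1]} := by
  simp only [twoTetrahedronPoints, coe_union, Set.image_union]
  congr 2
  · simp [tetrahedronVertices, Set.image_insert_eq, intPoint]
  · simp [tetrahedronEdgeMidpoints, Set.image_insert_eq, intPoint]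
  · ext x
    simp [interiorLevelOnePoints, intPoint, eq_comm, and_assoc]

section Classification

variable {q r : ℤ}

lemma mem_twoTetrahedronPoints_of_mem (hq : 0 < q) (hr : IsCoprime r q) {u v c : ℤ}
    (h : (u, v, c) ∈ latticePointsInTwoTetrahedron q r) :
    (u, v, c) ∈ twoTetrahedronPoints q r := by
  simp only [latticePointsInTwoTetrahedron, Set.mem_ofPred_eq] at h
  obtain ⟨hmod, hu, hv, hvc, huc⟩ := h
  have hdvd := hmod.dvd_iff_dvd_of_isCoprime hr
  have hc0 : 0 ≤ c := by nlinarith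
  have hc2 : c ≤ 2 := by nlinarith
  simp only [twoTetrahedronPoints, tetrahedronVertices, tetrahedronEdgeMidpoints,
    interiorLevelOnePoints, mem_union, mem_insert, mem_singleton, mem_image, mem_Icc, Prod.mk.injEq]
  interval_cases c
  · obtain rfl : v = 0 := by omega
    rcases Int.eq_zero_or_eq_or_eq_two_mul_of_dvd hq (hdvd.2 (dvd_zero q)) hu (by omega)
      with rfl | rfl | rfl <;> simp
  · rcases (by omega : v = 0 ∨ v = q ∨ 1 ≤ v ∧ v ≤ q - 1) with rfl | hvq | ⟨hv1, hvq⟩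
    · obtain rfl | rfl : u = 0 ∨ u = q := by
        have := Int.eq_zero_or_eq_or_eq_two_mul_of_dvd hq (hdvd.2 (dvd_zero q)) hu (by omega)
        omega
      all_goals simp
    · obtain rfl | rfl : u = 0 ∨ u = q := by
        have := Int.eq_zero_or_eq_or_eq_two_mul_of_dvd hq (hdvd.2 (hvq ▸ dvd_rfl)) hu (by omega)
        omega
      all_goals simp [hvq]
    · have hv_ndvd : ¬ q ∣ v := fun h => by
        have := Int.eq_zero_of_dvd_of_nonneg_of_lt (by omega) (by omega) h; omega
      have hu_lt : u < q := lt_of_le_of_ne (by omega) fun huq => hv_ndvd (hdvd.1 (huq ▸ dvd_rfl))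
      refine Or.inr ⟨v, ⟨hv1, hvq⟩, ?_, rfl, rfl⟩
      rw [mul_comm, ← hmod, Int.emod_eq_of_lt hu hu_lt]
  · obtain rfl : u = 0 := by omega
    rcases Int.eq_zero_or_eq_or_eq_two_mul_of_dvd hq (hdvd.1 (dvd_zero q)) hv (by omega)
      with rfl | rfl | rfl <;> simp

lemma mem_of_mem_twoTetrahedronPoints (hq : 0 < q) {t : ℤ × ℤ × ℤ}
    (h : t ∈ twoTetrahedronPoints q r) : t ∈ latticePointsInTwoTetrahedron q r := by
  simp only [twoTetrahedronPoints, tetrahedronVertices, tetrahedronEdgeMidpoints,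
    interiorLevelOnePoints, mem_union, mem_insert, mem_singleton, mem_image, mem_Icc] at h
  simp only [latticePointsInTwoTetrahedron, Set.mem_ofPred_eq]
  rcases h with hfinite | ⟨i, ⟨hi1, hiq⟩, rfl⟩
  · rcases hfinite with (rfl | rfl | rfl | rfl) | (rfl | rfl | rfl | rfl | rfl | rfl) <;>
      dsimp only <;>
      exact ⟨by simp [Int.ModEq, ← mul_assoc], by omega, by omega, by omega, by omega⟩
  · dsimp only
    exact ⟨(Int.mod_modEq _ _).trans (by rw [mul_comm]), Int.emod_nonneg _ hq.ne', by omega,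
      by omega, by linarith [Int.emod_lt_of_pos (i * r) hq]⟩

end Classification

lemma latticePointsInTwoTetrahedron_eq {q r : ℤ} (hq : 0 < q) (hr : IsCoprime r q) :
    latticePointsInTwoTetrahedron q r = ↑(twoTetrahedronPoints q r) :=
  Set.ext fun _ => ⟨mem_twoTetrahedronPoints_of_mem hq hr, mem_of_mem_twoTetrahedronPoints hq⟩

section Counting

variable {q : ℤ}

lemma card_tetrahedronVertices_union_edgeMidpoints (hq : 0 < q) :
    (tetrahedronVertices q ∪ tetrahedronEdgeMidpoints q).card = 10 := by
  simp only [tetrahedronVertices, tetrahedronEdgeMidpoints, insert_union, singleton_union]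
  repeat rw [card_insert_of_notMem (by simp <;> omega)]
  rfl

lemma card_interiorLevelOnePoints (r : ℤ) :
    (interiorLevelOnePoints q r).card = (q - 1).toNat := by
  rw [interiorLevelOnePoints, card_image_of_injective _ fun _ _ h => congrArg (·.2.1) h,
    Int.card_Icc]
  omega

lemma disjoint_interiorLevelOnePoints (r : ℤ) :
    Disjoint (tetrahedronVertices q ∪ tetrahedronEdgeMidpoints q) (interiorLevelOnePoints q r) := by
  refine disjoint_right.2 fun t ht ht' => ?_
  simp only [interiorLevelOnePoints, mem_image, mem_Icc] at ht
  obtain ⟨i, ⟨hi1, hiq⟩, rfl⟩ := ht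
  simp only [tetrahedronVertices, tetrahedronEdgeMidpoints, mem_union, mem_insert, mem_singleton,
    Prod.mk.injEq] at ht'
  omega

lemma card_twoTetrahedronPoints (hq : 0 < q) (r : ℤ) :
    (twoTetrahedronPoints q r).card = (q + 9).toNat := by
  rw [twoTetrahedronPoints, card_union_of_disjoint (disjoint_interiorLevelOnePoints r),
    card_tetrahedronVertices_union_edgeMidpoints hq, card_interiorLevelOnePoints]
  omega

end Counting

theorem lattice_points_of_two_dilated_right_angled_general
    (p q : ℤ) (hq : 1 < q) (hco : IsCoprime p q) :
    ({x : Fin 3 → ℝ | (∃ a b c m : ℤ, x = ![(q : ℝ) * a + m * (((-p) % q) : ℤ), (q : ℝ) * b + m, (c : ℝ)]) ∧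
        x ∈ convexHull ℝ
          ({![0,0,0], ![2*(q : ℝ),0,0], ![0,0,2], ![0,2*(q : ℝ),2]} : Set (Fin 3 → ℝ))} =
      ({![0,0,0], ![2*(q : ℝ),0,0], ![0,0,2], ![0,2*(q : ℝ),2]} : Set (Fin 3 → ℝ)) ∪
      ({![(q : ℝ),0,0], ![0,0,1], ![0,(q : ℝ),1], ![(q : ℝ),0,1], ![(q : ℝ),(q : ℝ),1], ![0,(q : ℝ),2]} : Set (Fin 3 → ℝ)) ∪
      {x : Fin 3 → ℝ | ∃ i : ℤ, 1 ≤ i ∧ i ≤ q - 1 ∧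
        x = ![(((i * ((-p) % q)) % q : ℤ) : ℝ), (i : ℝ), 1]}) ∧
    {x : Fin 3 → ℝ | (∃ a b c m : ℤ, x = ![(q : ℝ) * a + m * (((-p) % q) : ℤ), (q : ℝ) * b + m, (c : ℝ)]) ∧
        x ∈ convexHull ℝ
          ({![0,0,0], ![2*(q : ℝ),0,0], ![0,0,2], ![0,2*(q : ℝ),2]} : Set (Fin 3 → ℝ))}.ncard
      = (q + 9).toNat := by
  have hq₀ : 0 < q := by omega
  have hpoints := setOf_lattice_mem_convexHull_eq_image (r := (-p) % q) hq₀
  rw [latticePointsInTwoTetrahedron_eq hq₀ hco.neg_emod_left] at hpoints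
  refine ⟨hpoints.trans (image_intPoint_twoTetrahedronPoints q _), ?_⟩
  rw [hpoints, Set.ncard_image_of_injective _ intPoint_injective, Set.ncard_coe_finset,
    card_twoTetrahedronPoints hq₀]

/-- The points of `Λ_{p,q} = qℤ×qℤ×ℤ + ℤ·(p',1,0)` (with
`p' = (-p) mod q`) in `2Δ'(p,q) = conv{(0,0,0),(2q,0,0),(0,0,2),(0,2q,2)}` are:
the four vertices, the six edge midpoints, and the `q-1` points
`(i·p' mod q, i, 1)` for `1 ≤ i ≤ q-1`; in total `q + 9` points. -/
theorem lattice_points_of_two_dilated_right_angled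
    (p q : ℤ) (hq : 1 < q) (hp : 0 < p) (hpq : p < q) (hco : IsCoprime p q) :
    ({x : Fin 3 → ℝ | (∃ a b c m : ℤ, x = ![(q : ℝ) * a + m * (((-p) % q) : ℤ), (q : ℝ) * b + m, (c : ℝ)]) ∧
        x ∈ convexHull ℝ
          ({![0,0,0], ![2*(q : ℝ),0,0], ![0,0,2], ![0,2*(q : ℝ),2]} : Set (Fin 3 → ℝ))} =
      ({![0,0,0], ![2*(q : ℝ),0,0], ![0,0,2], ![0,2*(q : ℝ),2]} : Set (Fin 3 → ℝ)) ∪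
      ({![(q : ℝ),0,0], ![0,0,1], ![0,(q : ℝ),1], ![(q : ℝ),0,1], ![(q : ℝ),(q : ℝ),1], ![0,(q : ℝ),2]} : Set (Fin 3 → ℝ)) ∪
      {x : Fin 3 → ℝ | ∃ i : ℤ, 1 ≤ i ∧ i ≤ q - 1 ∧
        x = ![(((i * ((-p) % q)) % q : ℤ) : ℝ), (i : ℝ), 1]}) ∧
    {x : Fin 3 → ℝ | (∃ a b c m : ℤ, x = ![(q : ℝ) * a + m * (((-p) % q) : ℤ), (q : ℝ) * b + m, (c : ℝ)]) ∧
        x ∈ convexHull ℝ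
          ({![0,0,0], ![2*(q : ℝ),0,0], ![0,0,2], ![0,2*(q : ℝ),2]} : Set (Fin 3 → ℝ))}.ncard
      = (q + 9).toNat :=
  lattice_points_of_two_dilated_right_angled_general p q hq hco
end

section
/- Let 0 < p < q be coprime with q > 1, and set p′ = (−p) mod q. All the points (i·p′ mod q, i) for i = 1, …, q−1 lie on one of the two diagonals of the square [0,q]² (i.e., on the line y = x or on the line y = q − x) if and only if p ≡ 1 (mod q) or p ≡ −1 (mod q). -/
/-- With `p' = (-p) mod q`, all the points `(i·p' mod q, i)` for
`i = 1,…,q-1` lie on one of the two diagonals of the square `[0,q]²` (the line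
`y = x` or the line `y = q - x`) if and only if `p ≡ ±1 (mod q)`. -/
theorem tetragonal_iff_diagonal
    (p q : ℤ) (hq : 1 < q) (hp : 0 < p) (hpq : p < q) (hco : IsCoprime p q) :
    (∀ i : ℤ, 1 ≤ i → i ≤ q - 1 →
        (i * ((-p) % q)) % q = i ∨ (i * ((-p) % q)) % q = q - i) ↔
      (p ≡ 1 [ZMOD q] ∨ p ≡ -1 [ZMOD q]) := by
  have hq0 : 0 < q := by omega
  have hp' : (-p) % q = q - p := by
    have h1 : (-p) % q = ((q - p) + q * (-1)) % q := by ring_nf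
    rw [h1, Int.add_mul_emod_self_left, Int.emod_eq_of_lt (by omega) (by omega)]
  constructor
  · intro h
    have h1 := h 1 le_rfl (by omega)
    rw [hp', one_mul, Int.emod_eq_of_lt (by omega) (by omega)] at h1
    rcases h1 with h1 | h1
    · right
      show p % q = (-1) % q
      have : (-1 : ℤ) % q = q - 1 := by
        have : (-1 : ℤ) % q = ((q - 1) + q * (-1)) % q := by ring_nf
        rw [this, Int.add_mul_emod_self_left, Int.emod_eq_of_lt (by omega) (by omega)]
      rw [this, Int.emod_eq_of_lt (by omega) (by omega)]; omega
    · left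
      show p % q = 1 % q
      rw [Int.emod_eq_of_lt (by omega) (by omega),
        Int.emod_eq_of_lt (by omega) (by omega)]; omega
  · intro h i hi1 hi2
    rw [hp']
    rcases h with h | h
    · have hp1 : p = 1 := by
        have := h.sub_right 1
        rw [Int.ModEq] at this
        simp only [sub_self, Int.zero_emod] at this
        have := Int.eq_zero_of_dvd_of_natAbs_lt_natAbs (Int.dvd_of_emod_eq_zero this)
          (by omega)
        omega
      right
      subst hp1
      have : i * (q - 1) = (q - i) + q * (i - 1) := by ring
      rw [this, Int.add_mul_emod_self_left, Int.emod_eq_of_lt (by omega) (by omega)]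
    · have hp1 : p = q - 1 := by
        have := h.add_right 1
        rw [Int.ModEq] at this
        simp only [neg_add_cancel, Int.zero_emod] at this
        have hd := Int.dvd_of_emod_eq_zero this
        have := Int.le_of_dvd (by omega) hd
        omega
      left
      rw [hp1]
      have : q - (q - 1) = 1 := by ring
      rw [this, mul_one]
      exact Int.emod_eq_of_lt (by omega) (by omega)
end

section
/- Let q ≥ 2 and k ≥ 1. The number of points of the lattice qℤ × qℤ × ℤ contained in the dilated tetrahedron kΔ′(p,q) = conv{(0,0,0),(kq,0,0),(0,0,k),(0,kq,k)} equals C(k+3, 3), namely the points (aq, bq, c) with 0 ≤ c ≤ k, 0 ≤ a ≤ k−c, 0 ≤ b ≤ c. -/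
lemma sum_cp1 (m : ℕ) : ∑ c ∈ Finset.range m, (c+1) = (m+1).choose 2 := by
  induction m with
  | zero => simp
  | succ n ih =>
    rw [Finset.sum_range_succ, ih, Nat.choose_succ_succ (n+1) 1]
    simp [Nat.choose_one_right]; omega

lemma sum_main (k : ℕ) : ∑ c ∈ Finset.range (k+1), (k+1-c)*(c+1) = (k+3).choose 3 := by
  induction k with
  | zero => decide
  | succ n ih =>
    have h1 : ∀ c ∈ Finset.range (n+2), (n+2-c)*(c+1) = (n+1-c)*(c+1) + (c+1) := by
      intro c hc
      simp only [Finset.mem_range] at hc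
      have : n+2-c = (n+1-c)+1 := by omega
      rw [this]; ring
    rw [Finset.sum_congr rfl h1, Finset.sum_add_distrib, Finset.sum_range_succ, ih]
    rw [sum_cp1, Nat.choose_succ_succ (n+3) 2]
    simp [Nat.sub_self]
    have : n+2+1 = n+3 := by omega
    rw [this]
    omega

lemma hull_sub (q : ℝ) (hq : 2 ≤ q) (k : ℕ) (hk : 1 ≤ k) :
    convexHull ℝ
        ({![0,0,0], ![(k : ℝ) * q, 0, 0], ![0, 0, (k : ℝ)], ![0, (k : ℝ) * q, (k : ℝ)]} :
          Set (Fin 3 → ℝ)) ⊆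
      {x : Fin 3 → ℝ | 0 ≤ x 0 ∧ 0 ≤ x 1 ∧ x 1 ≤ q * x 2 ∧ x 0 + q * x 2 ≤ k * q} := by
  apply convexHull_min
  · intro v hv
    have hk' : (1:ℝ) ≤ k := by exact_mod_cast hk
    simp only [Set.mem_insert_iff, Set.mem_singleton_iff] at hv
    rcases hv with rfl | rfl | rfl | rfl <;>
      refine ⟨?_, ?_, ?_, ?_⟩ <;>
        simp [Matrix.cons_val_zero, Matrix.cons_val_one, Matrix.head_cons] <;> nlinarith
  · rintro x ⟨hx0, hx1, hx2, hx3⟩ y ⟨hy0, hy1, hy2, hy3⟩ a b ha hb hab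
    refine ⟨?_, ?_, ?_, ?_⟩ <;>
      simp only [Pi.add_apply, Pi.smul_apply, smul_eq_mul] <;> nlinarith

lemma mem_hull (q : ℝ) (hq : 2 ≤ q) (k : ℕ) (hk : 1 ≤ k)
    (a b c : ℝ) (hc0 : 0 ≤ c) (hck : c ≤ k) (ha0 : 0 ≤ a) (hac : a + c ≤ k)
    (hb0 : 0 ≤ b) (hbc : b ≤ c) :
    (fun i => ((![a * q, b * q, c] : Fin 3 → ℝ) i)) ∈ convexHull ℝ
      ({![0,0,0], ![(k : ℝ) * q, 0, 0], ![0, 0, (k : ℝ)], ![0, (k : ℝ) * q, (k : ℝ)]} :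
        Set (Fin 3 → ℝ)) := by
  have hkpos : (0:ℝ) < k := by
    have : (1:ℝ) ≤ k := by exact_mod_cast hk
    linarith
  set v : Fin 4 → (Fin 3 → ℝ) :=
    ![![0,0,0], ![(k : ℝ) * q, 0, 0], ![0, 0, (k : ℝ)], ![0, (k : ℝ) * q, (k : ℝ)]] with hv
  set w : Fin 4 → ℝ := ![(k - a - c)/k, a/k, (c - b)/k, b/k] with hw
  have hw0 : ∀ i ∈ Finset.univ, 0 ≤ w i := by
    intro i _
    fin_cases i <;> simp [hw] <;> apply div_nonneg (by linarith) (by linarith)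
  have hsum : ∑ i ∈ Finset.univ, w i = 1 := by
    simp [hw, Fin.sum_univ_four]
    field_simp
    ring
  have hmem : ∀ i ∈ Finset.univ, v i ∈
      ({![0,0,0], ![(k : ℝ) * q, 0, 0], ![0, 0, (k : ℝ)], ![0, (k : ℝ) * q, (k : ℝ)]} :
        Set (Fin 3 → ℝ)) := by
    intro i _; fin_cases i <;> simp [hv]
  have h := Finset.centerMass_mem_convexHull Finset.univ hw0 (by rw [hsum]; norm_num) hmem
  rw [Finset.centerMass_eq_of_sum_1 _ _ hsum] at h
  convert h using 1
  funext j
  simp only [Fin.sum_univ_four, hv, hw]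
  fin_cases j <;>
    simp [Matrix.cons_val_zero, Matrix.cons_val_one, Matrix.head_cons] <;>
    field_simp <;> ring


/-- The points of the lattice `qℤ × qℤ × ℤ` in
`kΔ'(p,q) = conv{(0,0,0),(kq,0,0),(0,0,k),(0,kq,k)}` are exactly the points
`(aq, bq, c)` with `0 ≤ c ≤ k`, `0 ≤ a ≤ k-c`, `0 ≤ b ≤ c`, and there are
`C(k+3,3)` of them. -/
theorem count_coarse_lattice_points_in_dilated_tetrahedron
    (q : ℤ) (hq : 2 ≤ q) (k : ℕ) (hk : 1 ≤ k) :
    ({y : Fin 3 → ℤ | q ∣ y 0 ∧ q ∣ y 1 ∧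
        (fun i => (y i : ℝ)) ∈ convexHull ℝ
          ({![0,0,0], ![(k : ℝ) * q, 0, 0], ![0, 0, (k : ℝ)], ![0, (k : ℝ) * q, (k : ℝ)]} :
            Set (Fin 3 → ℝ))} =
      {y : Fin 3 → ℤ | ∃ a b c : ℤ, 0 ≤ c ∧ c ≤ k ∧ 0 ≤ a ∧ a ≤ k - c ∧ 0 ≤ b ∧ b ≤ c ∧
        y = ![a * q, b * q, c]}) ∧
    {y : Fin 3 → ℤ | q ∣ y 0 ∧ q ∣ y 1 ∧
        (fun i => (y i : ℝ)) ∈ convexHull ℝ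
          ({![0,0,0], ![(k : ℝ) * q, 0, 0], ![0, 0, (k : ℝ)], ![0, (k : ℝ) * q, (k : ℝ)]} :
            Set (Fin 3 → ℝ))}.ncard = (k + 3).choose 3 := by
  have hq0 : (0:ℤ) < q := by linarith
  have hqR : (2:ℝ) ≤ (q:ℝ) := by exact_mod_cast hq
  have hseteq : ({y : Fin 3 → ℤ | q ∣ y 0 ∧ q ∣ y 1 ∧
        (fun i => (y i : ℝ)) ∈ convexHull ℝ
          ({![0,0,0], ![(k : ℝ) * q, 0, 0], ![0, 0, (k : ℝ)], ![0, (k : ℝ) * q, (k : ℝ)]} :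
            Set (Fin 3 → ℝ))} =
      {y : Fin 3 → ℤ | ∃ a b c : ℤ, 0 ≤ c ∧ c ≤ k ∧ 0 ≤ a ∧ a ≤ k - c ∧ 0 ≤ b ∧ b ≤ c ∧
        y = ![a * q, b * q, c]}) := by
    ext y
    simp only [Set.mem_setOf_eq]
    constructor
    · rintro ⟨⟨a, ha⟩, ⟨b, hb⟩, hhull⟩
      have hH := hull_sub (q:ℝ) hqR k hk hhull
      obtain ⟨h0, h1, h2, h3⟩ := hH
      have h0' : (0:ℤ) ≤ y 0 := by exact_mod_cast show (0:ℝ) ≤ (y 0 : ℝ) from h0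
      have h1' : (0:ℤ) ≤ y 1 := by exact_mod_cast show (0:ℝ) ≤ (y 1 : ℝ) from h1
      have h2' : y 1 ≤ q * y 2 := by
        exact_mod_cast show ((y 1 : ℤ) : ℝ) ≤ (q:ℝ) * ((y 2 : ℤ) : ℝ) from h2
      have h3' : y 0 + q * y 2 ≤ (k:ℤ) * q := by
        exact_mod_cast show ((y 0 : ℤ) : ℝ) + (q:ℝ) * ((y 2 : ℤ) : ℝ) ≤ (k:ℝ) * q from h3
      rw [ha] at h0' h3'
      rw [hb] at h1' h2'
      have ha' : 0 ≤ a := le_of_mul_le_mul_left (by simpa using h0') hq0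
      have hb' : 0 ≤ b := le_of_mul_le_mul_left (by simpa using h1') hq0
      have hby : b ≤ y 2 := le_of_mul_le_mul_left h2' hq0
      have hay : a + y 2 ≤ (k:ℤ) := by
        refine le_of_mul_le_mul_left ?_ hq0
        calc q * (a + y 2) = q * a + q * y 2 := by ring
          _ ≤ (k:ℤ) * q := h3'
          _ = q * k := by ring
      refine ⟨a, b, y 2, by omega, by omega, by omega, by omega, by omega, by omega, ?_⟩
      funext i
      fin_cases i <;> simp [ha, hb, mul_comm]
    · rintro ⟨a, b, c, hc0, hck, ha0, hac, hb0, hbc, rfl⟩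
      refine ⟨⟨a, by simp [mul_comm]⟩, ⟨b, by simp [mul_comm]⟩, ?_⟩
      have heq : (fun i => (((![a * q, b * q, c] : Fin 3 → ℤ) i : ℤ) : ℝ)) =
          (fun i => ((![(a:ℝ) * q, (b:ℝ) * q, (c:ℝ)] : Fin 3 → ℝ) i)) := by
        funext i
        fin_cases i <;> push_cast <;> simp
      rw [heq]
      exact mem_hull (q:ℝ) hqR k hk a b c (by exact_mod_cast hc0) (by exact_mod_cast hck)
        (by exact_mod_cast ha0)
        (by exact_mod_cast (show a + c ≤ (k:ℤ) by omega))
        (by exact_mod_cast hb0) (by exact_mod_cast hbc)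
  refine ⟨hseteq, ?_⟩
  rw [hseteq]
  classical
  set T : Finset (Fin 3 → ℤ) :=
    ((Finset.range (k+1)).sigma fun c => Finset.range (k+1-c) ×ˢ Finset.range (c+1)).image
      (fun p => ![(p.2.1 : ℤ) * q, (p.2.2 : ℤ) * q, (p.1 : ℤ)]) with hT
  have hsetT : {y : Fin 3 → ℤ | ∃ a b c : ℤ, 0 ≤ c ∧ c ≤ k ∧ 0 ≤ a ∧ a ≤ k - c ∧ 0 ≤ b ∧ b ≤ c ∧
        y = ![a * q, b * q, c]} = ↑T := by
    ext y
    simp only [hT, Finset.coe_image, Set.mem_image, Finset.mem_coe, Finset.mem_sigma,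
      Finset.mem_product, Finset.mem_range, Set.mem_setOf_eq]
    constructor
    · rintro ⟨a, b, c, hc0, hck, ha0, hac, hb0, hbc, rfl⟩
      refine ⟨⟨c.toNat, (a.toNat, b.toNat)⟩,
        ⟨by dsimp only; omega, by dsimp only; omega, by dsimp only; omega⟩, ?_⟩
      dsimp only
      rw [Int.toNat_of_nonneg ha0, Int.toNat_of_nonneg hb0, Int.toNat_of_nonneg hc0]
    · rintro ⟨⟨c, a, b⟩, ⟨hc, ha, hb⟩, rfl⟩
      dsimp only at hc ha hb
      exact ⟨a, b, c, by omega, by omega, by omega, by omega, by omega, by omega, rfl⟩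
  rw [hsetT, Set.ncard_coe_finset, hT]
  rw [Finset.card_image_of_injOn]
  · rw [Finset.card_sigma]
    simp only [Finset.card_product, Finset.card_range]
    exact sum_main k
  · rintro ⟨c, a, b⟩ _ ⟨c', a', b'⟩ _ h
    have h0 := congrFun h 0
    have h1 := congrFun h 1
    have h2 := congrFun h 2
    simp at h0 h1 h2
    have hc : c = c' := by exact_mod_cast h2
    have ha : a = a' := h0.resolve_right (by omega)
    have hb : b = b' := h1.resolve_right (by omega)
    simp [hc, ha, hb]
end

section
/- Let q > 1 and p coprime to q with p ≢ ±1 (mod q), p′ = (−p) mod q, p″ = (−p^{−1}) mod q, and assume 1 < p′ < q/2. Then p″ ≤ q − 2, and the open segment from (p′,1) to (p′+1, p″+1) separates the points (2p′, 2) and (1, p″) within the square [0,q]²; consequently any Y-monotone lattice path through all points (i·p′ mod q, i), 1 ≤ i ≤ q−1, crosses the segment from (p′,1) to (p′+1, p″+1) improperly. -/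
/-!
The lattice points `(i p' mod q, i)` of the Y-path are compared with the line through
`(p', 1)` with slope `p''`. Since `p'' p' ≡ 1 (mod q)`, the point with `i = 2` lies strictly
on one side and the point with `i = p''`, which is `(1, p'')`, strictly on the other. No
vertex with `2 ≤ i ≤ p''` lies on the line, since that would force `p'' ∣ i - 1`. Hence some
edge of the path between heights `2` and `p''` changes sides, and because the path is
Y-monotone, the crossing point lies strictly inside the segment from `(p', 1)` to
`(p' + 1, p'' + 1)`.
-/

theorem Int.exists_mem_Ico_and_not_add_one {P : ℤ → Prop} {a b : ℤ} (hab : a ≤ b) (ha : P a)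
    (hb : ¬ P b) : ∃ i ∈ Set.Ico a b, P i ∧ ¬ P (i + 1) := by
  by_contra! h
  refine hb (Int.leInduction (motive := fun n _ => n ≤ b → P n) (fun _ => ha)
    (fun n han ih hnb => h n ⟨han, by omega⟩ (ih (by omega))) b hab le_rfl)

theorem Int.ModEq.eq_of_nonneg_of_lt {n a b : ℤ} (h : a ≡ b [ZMOD n]) (ha₀ : 0 ≤ a)
    (ha : a < n) (hb₀ : 0 ≤ b) (hb : b < n) : a = b := by
  rwa [Int.ModEq, Int.emod_eq_of_lt ha₀ ha, Int.emod_eq_of_lt hb₀ hb] at h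

theorem three_le_of_mul_modEq_one {q x y : ℤ} (hx : 1 < x) (hxq : 2 * x < q) (hy : 0 ≤ y)
    (hxy : y * x ≡ 1 [ZMOD q]) : 3 ≤ y := by
  by_contra! hy3
  have h := hxy.eq_of_nonneg_of_lt (by positivity) (by nlinarith) zero_le_one (by omega)
  interval_cases y <;> omega

theorem le_sub_two_of_mul_modEq_one {q x y : ℤ} (hx : 0 < x) (hxq : x + 1 < q) (hyq : y < q)
    (hxy : y * x ≡ 1 [ZMOD q]) : y ≤ q - 2 := by
  by_contra! hy
  obtain rfl : y = q - 1 := by omega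
  have hneg : q - x ≡ (q - 1) * x [ZMOD q] := Int.modEq_iff_dvd.2 ⟨x - 1, by ring⟩
  have := (hneg.trans hxy).eq_of_nonneg_of_lt (by omega) (by omega) zero_le_one (by omega)
  omega

/-- `(orient a b c)` is twice the signed area of the triangle `a b c`: its sign tells on which
side of the line `a b` the point `c` lies. -/
def orient (a b c : Fin 2 → ℝ) : ℝ :=
  (b 0 - a 0) * (c 1 - a 1) - (b 1 - a 1) * (c 0 - a 0)

theorem orient_smul_add_smul {a b c d : Fin 2 → ℝ} (s : ℝ) :
    orient a b ((1 - s) • c + s • d) = (1 - s) * orient a b c + s * orient a b d := by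
  simp only [orient, Pi.add_apply, Pi.smul_apply, smul_eq_mul]
  ring

theorem openSegment_inter_nonempty_of_orient {a b c d : Fin 2 → ℝ} (hac : a 1 ≤ c 1)
    (hcd : c 1 < d 1) (hdb : d 1 ≤ b 1) (hc : orient a b c < 0) (hd : 0 < orient a b d) :
    (openSegment ℝ a b ∩ openSegment ℝ c d).Nonempty := by
  set s := orient a b c / (orient a b c - orient a b d)
  have hs₀ : 0 < s := div_pos_of_neg_of_neg hc (by linarith)
  have hs₁ : s < 1 := (div_lt_one_of_neg (by linarith)).2 (by linarith)
  set X := (1 - s) • c + s • d with hX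
  have hXline : orient a b X = 0 := by
    have hsα := div_mul_cancel₀ (orient a b c) (by linarith : orient a b c - orient a b d ≠ 0)
    rw [hX, orient_smul_add_smul]
    linear_combination -hsα
  have hX₁ : X 1 = (1 - s) * c 1 + s * d 1 := by simp [hX]
  have hba : 0 < b 1 - a 1 := by linarith
  set t := (X 1 - a 1) / (b 1 - a 1)
  have ht₀ : 0 < t := div_pos (by nlinarith) hba
  have ht₁ : t < 1 := (div_lt_one hba).2 (by nlinarith)
  have htX : t * (b 1 - a 1) = X 1 - a 1 := div_mul_cancel₀ _ hba.ne'
  refine ⟨X, ⟨1 - t, t, by linarith, ht₀, by ring, ?_⟩,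
    ⟨1 - s, s, by linarith, hs₀, by ring, rfl⟩⟩
  funext j
  fin_cases j
  · simp only [orient] at hXline
    simp only [Pi.add_apply, Pi.smul_apply, smul_eq_mul, Fin.zero_eta]
    refine mul_left_cancel₀ hba.ne' ?_
    linear_combination (b 0 - a 0) * htX + hXline
  · simp only [Pi.add_apply, Pi.smul_apply, smul_eq_mul, Fin.mk_one]
    linear_combination htX

def latticeSide (q x y i : ℤ) : ℤ :=
  (i - 1) - y * (i * x % q - x)

theorem cast_latticeSide (q x y i : ℤ) :
    (latticeSide q x y i : ℝ) =
      orient ![x, 1] ![x + 1, y + 1] ![((i * x % q : ℤ) : ℝ), i] := by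
  simp only [latticeSide, orient, Matrix.cons_val_zero, Matrix.cons_val_one]
  push_cast
  ring

theorem exists_latticeSide_sign_change {q x y : ℤ} (hx : 1 < x) (hxq : 2 * x < q) (hy : 3 ≤ y)
    (hxy : y * x ≡ 1 [ZMOD q]) :
    ∃ i ∈ Set.Ico 2 y, latticeSide q x y i < 0 ∧ 0 < latticeSide q x y (i + 1) := by
  have h₂ : latticeSide q x y 2 < 0 := by
    rw [latticeSide, Int.emod_eq_of_lt (by omega) hxq]
    nlinarith
  have hy : ¬ latticeSide q x y y < 0 := by
    rw [latticeSide, hxy.eq.trans (Int.emod_eq_of_lt zero_le_one (by omega))]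
    nlinarith
  have hne : ∀ i, 2 ≤ i → i ≤ y → latticeSide q x y i ≠ 0 := by
    intro i hi₂ hiy h₀
    have hdvd : y ∣ i - 1 := ⟨i * x % q - x, by rw [latticeSide] at h₀; linarith⟩
    have := Int.le_of_dvd (by omega) hdvd
    omega
  obtain ⟨i, ⟨hi₂, hiy⟩, hneg, hnonneg⟩ :=
    Int.exists_mem_Ico_and_not_add_one (P := (latticeSide q x y · < 0)) (by omega) h₂ hy
  exact ⟨i, ⟨hi₂, hiy⟩, hneg, (not_lt.1 hnonneg).lt_of_ne' (hne _ (by omega) (by omega))⟩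

theorem xpath_ypath_incompatible_general
    (p q r p' p'' : ℤ)
    (hr : p * r ≡ 1 [ZMOD q])
    (hp' : p' = (-p) % q) (hp'' : p'' = (-r) % q)
    (hp'1 : 1 < p') (hp'q : 2 * p' < q) :
    p'' ≤ q - 2 ∧
    (p'' * (2 * p' - p') - (2 - 1)) * (p'' * (1 - p') - (p'' - 1)) < 0 ∧
    ∃ i : ℤ, 1 ≤ i ∧ i ≤ q - 2 ∧
      (openSegment ℝ (![(p' : ℝ), 1]) (![(p' : ℝ) + 1, (p'' : ℝ) + 1]) ∩
        openSegment ℝ (![(((i * p') % q : ℤ) : ℝ), (i : ℝ)])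
          (![((((i + 1) * p') % q : ℤ) : ℝ), ((i : ℝ) + 1)])).Nonempty := by
  have hinv : p'' * p' ≡ 1 [ZMOD q] := by
    have h := (hp'' ▸ Int.mod_modEq (-r) q).mul (hp' ▸ Int.mod_modEq (-p) q)
    rw [neg_mul_neg, mul_comm r p] at h
    exact h.trans hr
  have hp''₀ : 0 ≤ p'' := hp'' ▸ Int.emod_nonneg _ (by omega)
  have hp''₃ := three_le_of_mul_modEq_one hp'1 hp'q hp''₀ hinv
  have hp''q := le_sub_two_of_mul_modEq_one (by omega) (by omega)
    (hp'' ▸ Int.emod_lt_of_pos _ (by omega)) hinv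
  refine ⟨hp''q, ?_, ?_⟩
  · have : 0 < p'' * p' - 1 := by nlinarith
    calc _ = -(p'' * p' - 1) ^ 2 := by ring
      _ < 0 := neg_neg_of_pos (pow_pos this 2)
  obtain ⟨i, ⟨hi₂, hip''⟩, hneg, hpos⟩ :=
    exists_latticeSide_sign_change hp'1 hp'q hp''₃ hinv
  refine ⟨i, by omega, by omega, openSegment_inter_nonempty_of_orient ?_ ?_ ?_ ?_ ?_⟩
  any_goals simp only [Matrix.cons_val_zero, Matrix.cons_val_one]
  · exact_mod_cast (by omega : 1 ≤ i)
  · linarith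
  · linarith [(Int.cast_lt (R := ℝ)).2 hip'']
  · rw [← cast_latticeSide]
    exact_mod_cast hneg
  · have h := cast_latticeSide q p' p'' (i + 1)
    push_cast at h
    rw [← h]
    exact_mod_cast hpos

/-- For `p ≢ ±1 (mod q)`, with `p' = (-p) mod q`, `p'' = (-p⁻¹) mod q`
and `1 < p' < q/2`, we have `p'' ≤ q - 2`, the points `(2p',2)` and `(1,p'')` lie
strictly on opposite sides of the line through `(p',1)` and `(p'+1,p''+1)`, and
consequently the Y-monotone polygonal path through all points `(i·p' mod q, i)`,
`1 ≤ i ≤ q-1`, crosses the open segment from `(p',1)` to `(p'+1,p''+1)`. -/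
theorem xpath_ypath_incompatible
    (p q r p' p'' : ℤ) (hq : 1 < q) (hp : 0 < p) (hpq : p < q) (hco : IsCoprime p q)
    (hr : p * r ≡ 1 [ZMOD q])
    (hp1 : ¬ p ≡ 1 [ZMOD q]) (hpm1 : ¬ p ≡ -1 [ZMOD q])
    (hp' : p' = (-p) % q) (hp'' : p'' = (-r) % q)
    (hp'1 : 1 < p') (hp'q : 2 * p' < q) :
    p'' ≤ q - 2 ∧
    (p'' * (2 * p' - p') - (2 - 1)) * (p'' * (1 - p') - (p'' - 1)) < 0 ∧
    ∃ i : ℤ, 1 ≤ i ∧ i ≤ q - 2 ∧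
      (openSegment ℝ (![(p' : ℝ), 1]) (![(p' : ℝ) + 1, (p'' : ℝ) + 1]) ∩
        openSegment ℝ (![(((i * p') % q : ℤ) : ℝ), (i : ℝ)])
          (![((((i + 1) * p') % q : ℤ) : ℝ), ((i : ℝ) + 1)])).Nonempty :=
  xpath_ypath_incompatible_general p q r p' p'' hr hp' hp'' hp'1 hp'q
end

section
/- Let q ≥ 2 and consider the lattice Λ = qℤ×qℤ×ℤ + ℤ·(q−1,1,0) and the points a_i = (q−i, i, 1) for 0 ≤ i ≤ q. Let b₁,…,b₈ be the four vertices (0,0,0),(2q,0,0),(0,0,2),(0,2q,2) of 2Δ′(1,q) together with the midpoints of the four edges of 2Δ′(1,q) not meeting the segment a₀a_q, arranged cyclically. Then the 8q tetrahedra conv{a_i, a_{i+1}, b_j, b_{j+1}} (indices j mod 8), 0 ≤ i ≤ q−1, 1 ≤ j ≤ 8, have disjoint interiors, cover 2Δ′(1,q), and each is unimodular with respect to Λ; hence 2Δ′(1,q) has a unimodular triangulation. -/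
/-- The points `a_i = (q - i, i, 1)` along the diagonal at height 1. -/
def aPt (q i : ℤ) : Fin 3 → ℝ := ![(q : ℝ) - i, (i : ℝ), 1]

/-- The four vertices of `2Δ'(1,q)` and the midpoints of the four edges not meeting
the segment `a₀a_q`, in cyclic order around that segment. -/
def bPt (q : ℤ) : Fin 8 → (Fin 3 → ℝ) :=
  ![![2 * (q : ℝ), 0, 0], ![(q : ℝ), 0, 0], ![0, 0, 0], ![0, 0, 1],
    ![0, 0, 2], ![0, (q : ℝ), 2], ![0, 2 * (q : ℝ), 2], ![(q : ℝ), (q : ℝ), 1]]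

/-- The tetrahedron `conv{a_i, a_{i+1}, b_j, b_{j+1}}` (cyclic index `j`). -/
def tetra (q i : ℤ) (j : Fin 8) : Set (Fin 3 → ℝ) :=
  convexHull ℝ {aPt q i, aPt q (i + 1), bPt q j, bPt q (j + 1)}

/-- The lattice `Λ_{1,q} = qℤ×qℤ×ℤ + ℤ·(q-1,1,0)`, as a subset of `ℝ³`. -/
def lambdaOneQ (q : ℤ) : Set (Fin 3 → ℝ) :=
  {x | ∃ a b c m : ℤ, x = ![(q : ℝ) * a + m * ((q : ℝ) - 1), (q : ℝ) * b + m, (c : ℝ)]}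

/-- `2Δ'(1,q)`. -/
def twoDelta (q : ℤ) : Set (Fin 3 → ℝ) :=
  convexHull ℝ ({![0,0,0], ![2 * (q : ℝ), 0, 0], ![0,0,2], ![0, 2 * (q : ℝ), 2]} : Set (Fin 3 → ℝ))


namespace TriAux

def fin8cases {P : Fin 8 → Sort*} (h0 : P 0) (h1 : P 1) (h2 : P 2) (h3 : P 3)
    (h4 : P 4) (h5 : P 5) (h6 : P 6) (h7 : P 7) : ∀ j, P j
  | 0 => h0 | 1 => h1 | 2 => h2 | 3 => h3 | 4 => h4 | 5 => h5 | 6 => h6 | 7 => h7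
def fin3cases {P : Fin 3 → Sort*} (h0 : P 0) (h1 : P 1) (h2 : P 2) : ∀ m, P m
  | 0 => h0 | 1 => h1 | 2 => h2
lemma bPt_0 (q : ℤ) : bPt q 0 = ![2 * (q : ℝ), 0, 0] := rfl
lemma bPt_0' (q : ℤ) (h : 0 < 8) : bPt q ⟨0, h⟩ = ![2 * (q : ℝ), 0, 0] := rfl
lemma bPt_1' (q : ℤ) (h : 1 < 8) : bPt q ⟨1, h⟩ = ![(q : ℝ), 0, 0] := rfl
lemma bPt_2' (q : ℤ) (h : 2 < 8) : bPt q ⟨2, h⟩ = ![0, 0, 0] := rfl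
lemma bPt_3' (q : ℤ) (h : 3 < 8) : bPt q ⟨3, h⟩ = ![0, 0, 1] := rfl
lemma bPt_4' (q : ℤ) (h : 4 < 8) : bPt q ⟨4, h⟩ = ![0, 0, 2] := rfl
lemma bPt_5' (q : ℤ) (h : 5 < 8) : bPt q ⟨5, h⟩ = ![0, (q : ℝ), 2] := rfl
lemma bPt_6' (q : ℤ) (h : 6 < 8) : bPt q ⟨6, h⟩ = ![0, 2 * (q : ℝ), 2] := rfl
lemma bPt_7' (q : ℤ) (h : 7 < 8) : bPt q ⟨7, h⟩ = ![(q : ℝ), (q : ℝ), 1] := rfl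
lemma bPt_1 (q : ℤ) : bPt q 1 = ![(q : ℝ), 0, 0] := rfl
lemma bPt_2 (q : ℤ) : bPt q 2 = ![0, 0, 0] := rfl
lemma bPt_3 (q : ℤ) : bPt q 3 = ![0, 0, 1] := rfl
lemma bPt_4 (q : ℤ) : bPt q 4 = ![0, 0, 2] := rfl
lemma bPt_5 (q : ℤ) : bPt q 5 = ![0, (q : ℝ), 2] := rfl
lemma bPt_6 (q : ℤ) : bPt q 6 = ![0, 2 * (q : ℝ), 2] := rfl
lemma bPt_7 (q : ℤ) : bPt q 7 = ![(q : ℝ), (q : ℝ), 1] := rfl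
@[simp] lemma vec3_two {α : Type*} (a b c : α) : ![a, b, c] 2 = c := rfl

noncomputable def Uc (q : ℤ) (x : Fin 3 → ℝ) : ℝ := x 0 + x 1 - q
noncomputable def Vc (q : ℤ) (x : Fin 3 → ℝ) : ℝ := q * x 2 - q
noncomputable def RR (q : ℤ) (j : Fin 8) (x : Fin 3 → ℝ) : ℝ :=
  match j with
  | 0 => Uc q x
  | 1 => Uc q x - Vc q x
  | 2 => -Vc q x
  | 3 => -Uc q x - Vc q x
  | 4 => -Uc q x
  | 5 => Vc q x - Uc q x
  | 6 => Vc q x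
  | 7 => Uc q x + Vc q x
noncomputable def TT (q : ℤ) (j : Fin 8) (x : Fin 3 → ℝ) : ℝ :=
  match j with
  | 0 => Vc q x + q
  | 1 => Vc q x + q
  | 2 => Uc q x + q
  | 3 => Uc q x + q
  | 4 => (q : ℝ) - Vc q x
  | 5 => (q : ℝ) - Vc q x
  | 6 => (q : ℝ) - Uc q x
  | 7 => (q : ℝ) - Uc q x
noncomputable def GG (q : ℤ) (j : Fin 8) (x : Fin 3 → ℝ) : ℝ :=
  match j with
  | 0 => x 1 | 1 => x 1 | 2 => x 1 | 3 => x 1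
  | 4 => x 1 - Uc q x - Vc q x
  | 5 => x 1 - Uc q x - Vc q x
  | 6 => x 1 - Uc q x - Vc q x
  | 7 => x 1 - Uc q x - Vc q x

lemma recon (q i : ℤ) (hq : (q:ℝ) ≠ 0) (j : Fin 8) (x : Fin 3 → ℝ) :
    ((((i:ℝ)+1) * TT q j x - q * GG q j x)/q) • aPt q i
    + ((q * GG q j x - i * TT q j x)/q) • aPt q (i+1)
    + (RR q j x / q) • bPt q j + (RR q (j+3) x / q) • bPt q (j+1) = x := by
  funext m
  induction j using fin8cases <;> induction m using fin3cases <;>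
    · simp only [Pi.add_apply, Pi.smul_apply, smul_eq_mul, RR, TT, GG, Uc, Vc, aPt,
        bPt_0, bPt_1, bPt_2, bPt_3, bPt_4, bPt_5, bPt_6, bPt_7,
        Matrix.cons_val_zero, Matrix.cons_val_one, Matrix.head_cons, Matrix.cons_val_two,
        Matrix.cons_val_zero', Matrix.cons_val_succ', Matrix.cons_val_succ,
        bPt_0', bPt_1', bPt_2', bPt_3', bPt_4', bPt_5', bPt_6', bPt_7',
        Matrix.tail_cons, Fin.isValue, Fin.reduceAdd]
      push_cast
      field_simp
      ring
def sysW (q i : ℤ) (j : Fin 8) (x : Fin 3 → ℝ) : Prop :=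
  0 ≤ RR q j x ∧ 0 ≤ RR q (j + 3) x ∧
    (i : ℝ) * TT q j x ≤ (q : ℝ) * GG q j x ∧
    (q : ℝ) * GG q j x ≤ ((i : ℝ) + 1) * TT q j x

lemma RsumT (q : ℤ) (j : Fin 8) (x : Fin 3 → ℝ) :
    RR q j x + RR q (j + 3) x + TT q j x = q := by
  fin_cases j <;> simp [RR, TT] <;> ring

lemma Rneg (q : ℤ) (j : Fin 8) (x : Fin 3 → ℝ) : RR q (j + 4) x = -RR q j x := by
  fin_cases j <;> simp [RR] <;> ring

lemma Rzero (q : ℤ) (j : Fin 8) (x : Fin 3 → ℝ) (hU : Uc q x = 0) (hV : Vc q x = 0) :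
    RR q j x = 0 := by
  fin_cases j <;> simp [RR, hU, hV]

lemma Tval (q : ℤ) (j : Fin 8) (x : Fin 3 → ℝ) (hU : Uc q x = 0) (hV : Vc q x = 0) :
    TT q j x = q := by
  fin_cases j <;> simp [TT, hU, hV]

lemma Gval (q : ℤ) (j : Fin 8) (x : Fin 3 → ℝ) (hU : Uc q x = 0) (hV : Vc q x = 0) :
    GG q j x = x 1 := by
  fin_cases j <;> simp [GG, hU, hV]

/-- adjacent sectors force the shared ray -/
lemma adjR (q : ℤ) (j : Fin 8) (x : Fin 3 → ℝ)
    (h1 : 0 ≤ RR q j x) (h2 : 0 ≤ RR q ((j + 1) + 3) x) : RR q j x = 0 := by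
  have h3 : ((j + 1) + 3 : Fin 8) = j + 4 := by rw [add_assoc]; rfl
  rw [h3, Rneg] at h2
  linarith

/-- far sectors force the center -/
lemma farUV (q : ℤ) (j j' : Fin 8) (x : Fin 3 → ℝ)
    (hne : j' ≠ j) (hne1 : j' ≠ j + 1) (hne2 : j ≠ j' + 1)
    (h1 : 0 ≤ RR q j x) (h2 : 0 ≤ RR q (j + 3) x)
    (h3 : 0 ≤ RR q j' x) (h4 : 0 ≤ RR q (j' + 3) x) :
    Uc q x = 0 ∧ Vc q x = 0 := by
  fin_cases j <;> fin_cases j' <;>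
    simp_all [RR] <;> constructor <;> linarith

/-- equal T and G across the shared ray -/
lemma TGeq (q : ℤ) (j : Fin 8) (x : Fin 3 → ℝ) (h : RR q j x = 0) :
    TT q (j + 1) x = TT q j x ∧ GG q (j + 1) x = GG q j x := by
  fin_cases j <;> simp_all [RR, TT, GG] <;> first | (constructor <;> linarith) | linarith


lemma mem_hull_of_combo {S : Set (Fin 3 → ℝ)} (v : Fin 4 → Fin 3 → ℝ) (c : Fin 4 → ℝ)
    (h0 : ∀ k, 0 ≤ c k) (h1 : c 0 + c 1 + c 2 + c 3 = 1)
    (hv : ∀ k, c k ≠ 0 → v k ∈ S) {x : Fin 3 → ℝ}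
    (hx : c 0 • v 0 + c 1 • v 1 + c 2 • v 2 + c 3 • v 3 = x) : x ∈ convexHull ℝ S := by
  subst hx
  have hsum : ∑ k : Fin 4, c k = 1 := by rw [Fin.sum_univ_four]; exact h1
  set t := Finset.univ.filter (fun k => c k ≠ 0) with ht
  have htsum : ∑ k ∈ t, c k = 1 := by
    rw [ht, Finset.sum_filter_ne_zero]; exact hsum
  have hmem := Finset.centerMass_mem_convexHull t (fun k _ => h0 k)
    (by rw [htsum]; norm_num) (fun k hk => hv k (Finset.mem_filter.mp hk).2)
  rw [Finset.centerMass_eq_of_sum_1 _ _ htsum] at hmem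
  have : ∑ k ∈ t, c k • v k = ∑ k : Fin 4, c k • v k := by
    rw [ht]
    refine Finset.sum_filter_of_ne ?_
    intro k _ hk hc
    exact hk (by rw [hc, zero_smul])
  rw [this, Fin.sum_univ_four] at hmem
  exact hmem

lemma interior_aux {S : Set (Fin 3 → ℝ)} {c : Fin 3 → ℝ} {d : ℝ} (k : Fin 3) (hck : c k ≠ 0)
    (hS : ∀ y ∈ S, 0 ≤ c 0 * y 0 + c 1 * y 1 + c 2 * y 2 + d) {x : Fin 3 → ℝ}
    (hx : x ∈ interior S) : 0 < c 0 * x 0 + c 1 * x 1 + c 2 * x 2 + d := by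
  by_contra h
  push_neg at h
  have h0 : (0:ℝ) ≤ c 0 * x 0 + c 1 * x 1 + c 2 * x 2 + d := hS x (interior_subset hx)
  have hfx : c 0 * x 0 + c 1 * x 1 + c 2 * x 2 + d = 0 := le_antisymm h h0
  obtain ⟨ε, hε, hball⟩ := Metric.isOpen_iff.mp isOpen_interior x hx
  set δ : ℝ := if 0 < c k then -(ε/2) else (ε/2) with hδ
  have hδabs : |δ| < ε := by
    rw [hδ]; split
    · rw [abs_of_nonpos (by linarith)]; linarith
    · rw [abs_of_nonneg (by linarith)]; linarith
  have hcδ : c k * δ < 0 := by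
    rw [hδ]; split
    · rename_i hc; have : (0:ℝ) < ε/2 := by linarith
      nlinarith
    · rename_i hc
      have hc' : c k < 0 := lt_of_le_of_ne (le_of_not_gt hc) hck
      nlinarith
  set y : Fin 3 → ℝ := Function.update x k (x k + δ) with hy
  have hdist : dist y x < ε := by
    rw [dist_pi_lt_iff hε]
    intro i
    by_cases hik : i = k
    · subst hik
      rw [hy, Function.update_self, Real.dist_eq, add_sub_cancel_left]
      exact hδabs
    · rw [hy, Function.update_of_ne hik, dist_self]; exact hε
  have hyS : y ∈ S := interior_subset (hball (Metric.mem_ball.mpr hdist))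
  have hfy : c 0 * y 0 + c 1 * y 1 + c 2 * y 2 + d
      = c 0 * x 0 + c 1 * x 1 + c 2 * x 2 + d + c k * δ := by
    fin_cases k <;>
      simp [hy, Function.update_apply, Fin.ext_iff] <;> ring
  have := hS y hyS
  rw [hfy, hfx] at this
  linarith

def fin4cases {P : Fin 4 → Sort*} (h0 : P 0) (h1 : P 1) (h2 : P 2) (h3 : P 3) : ∀ k, P k
  | 0 => h0 | 1 => h1 | 2 => h2 | 3 => h3

lemma Raff (q : ℤ) (j : Fin 8) (y z : Fin 3 → ℝ) (a b : ℝ) (hab : a + b = 1) :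
    RR q j (a • y + b • z) = a * RR q j y + b * RR q j z := by
  have hb : b = 1 - a := by linarith
  subst hb
  induction j using fin8cases <;>
    simp [RR, Uc, Vc, Pi.add_apply, Pi.smul_apply, smul_eq_mul] <;> ring

lemma Taff (q : ℤ) (j : Fin 8) (y z : Fin 3 → ℝ) (a b : ℝ) (hab : a + b = 1) :
    TT q j (a • y + b • z) = a * TT q j y + b * TT q j z := by
  have hb : b = 1 - a := by linarith
  subst hb
  induction j using fin8cases <;>
    simp [TT, Uc, Vc, Pi.add_apply, Pi.smul_apply, smul_eq_mul] <;> ring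

lemma Gaff (q : ℤ) (j : Fin 8) (y z : Fin 3 → ℝ) (a b : ℝ) (hab : a + b = 1) :
    GG q j (a • y + b • z) = a * GG q j y + b * GG q j z := by
  have hb : b = 1 - a := by linarith
  subst hb
  induction j using fin8cases <;>
    simp [GG, Uc, Vc, Pi.add_apply, Pi.smul_apply, smul_eq_mul] <;> ring

lemma Ua (q n : ℤ) : Uc q (aPt q n) = 0 := by simp [Uc, aPt]
lemma Va (q n : ℤ) : Vc q (aPt q n) = 0 := by simp [Vc, aPt]
lemma Ga (q n : ℤ) (j : Fin 8) : GG q j (aPt q n) = (n : ℝ) := by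
  rw [Gval q j _ (Ua q n) (Va q n)]; simp [aPt]

lemma Rb1 (q : ℤ) (j : Fin 8) : RR q j (bPt q j) = q := by
  induction j using fin8cases <;>
    simp [RR, Uc, Vc, bPt_0, bPt_1, bPt_2, bPt_3, bPt_4, bPt_5, bPt_6, bPt_7] <;> ring

lemma Rb2 (q : ℤ) (j : Fin 8) : RR q (j + 3) (bPt q j) = 0 := by
  induction j using fin8cases <;>
    simp [RR, Uc, Vc, bPt_0, bPt_1, bPt_2, bPt_3, bPt_4, bPt_5, bPt_6, bPt_7] <;> ring

lemma Rb3 (q : ℤ) (j : Fin 8) : RR q j (bPt q (j + 1)) = 0 := by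
  induction j using fin8cases <;>
    simp [RR, Uc, Vc, bPt_0, bPt_1, bPt_2, bPt_3, bPt_4, bPt_5, bPt_6, bPt_7] <;> ring

lemma Rb4 (q : ℤ) (j : Fin 8) : RR q (j + 3) (bPt q (j + 1)) = q := by
  induction j using fin8cases <;>
    simp [RR, Uc, Vc, bPt_0, bPt_1, bPt_2, bPt_3, bPt_4, bPt_5, bPt_6, bPt_7] <;> ring

lemma Tb1 (q : ℤ) (j : Fin 8) : TT q j (bPt q j) = 0 := by
  induction j using fin8cases <;>
    simp [TT, Uc, Vc, bPt_0, bPt_1, bPt_2, bPt_3, bPt_4, bPt_5, bPt_6, bPt_7] <;> ring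

lemma Tb2 (q : ℤ) (j : Fin 8) : TT q j (bPt q (j + 1)) = 0 := by
  induction j using fin8cases <;>
    simp [TT, Uc, Vc, bPt_0, bPt_1, bPt_2, bPt_3, bPt_4, bPt_5, bPt_6, bPt_7] <;> ring

lemma Gb1 (q : ℤ) (j : Fin 8) : GG q j (bPt q j) = 0 := by
  induction j using fin8cases <;>
    simp [GG, Uc, Vc, bPt_0, bPt_1, bPt_2, bPt_3, bPt_4, bPt_5, bPt_6, bPt_7] <;> ring

lemma Gb2 (q : ℤ) (j : Fin 8) : GG q j (bPt q (j + 1)) = 0 := by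
  induction j using fin8cases <;>
    simp [GG, Uc, Vc, bPt_0, bPt_1, bPt_2, bPt_3, bPt_4, bPt_5, bPt_6, bPt_7] <;> ring

lemma qpos (q : ℤ) (hq : 2 ≤ q) : (0:ℝ) < q := by
  have : (2:ℝ) ≤ q := by exact_mod_cast hq
  linarith

lemma convex_sysW (q i : ℤ) (j : Fin 8) : Convex ℝ {y : Fin 3 → ℝ | sysW q i j y} := by
  intro y hy z hz a b ha hb hab
  obtain ⟨h1, h2, h3, h4⟩ := hy
  obtain ⟨g1, g2, g3, g4⟩ := hz
  refine ⟨?_, ?_, ?_, ?_⟩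
  · rw [Raff q j y z a b hab]
    have := mul_nonneg ha h1; have := mul_nonneg hb g1; linarith
  · rw [Raff q (j + 3) y z a b hab]
    have := mul_nonneg ha h2; have := mul_nonneg hb g2; linarith
  · rw [Taff q j y z a b hab, Gaff q j y z a b hab]
    have := mul_nonneg ha (sub_nonneg.mpr h3)
    have := mul_nonneg hb (sub_nonneg.mpr g3)
    nlinarith
  · rw [Taff q j y z a b hab, Gaff q j y z a b hab]
    have := mul_nonneg ha (sub_nonneg.mpr h4)
    have := mul_nonneg hb (sub_nonneg.mpr g4)
    nlinarith

lemma mem_tetra_iff (q i : ℤ) (hq : 2 ≤ q) (j : Fin 8) (x : Fin 3 → ℝ) :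
    x ∈ tetra q i j ↔ sysW q i j x := by
  have hq0 : (0:ℝ) < q := qpos q hq
  constructor
  · intro hx
    refine convexHull_min ?_ (convex_sysW q i j) hx
    rintro y (rfl | rfl | rfl | rfl)
    · refine ⟨le_of_eq (Rzero q j _ (Ua q i) (Va q i)).symm,
        le_of_eq (Rzero q (j+3) _ (Ua q i) (Va q i)).symm, ?_, ?_⟩ <;>
        rw [Tval q j _ (Ua q i) (Va q i), Ga q i j] <;> nlinarith
    · refine ⟨le_of_eq (Rzero q j _ (Ua q (i+1)) (Va q (i+1))).symm,
        le_of_eq (Rzero q (j+3) _ (Ua q (i+1)) (Va q (i+1))).symm, ?_, ?_⟩ <;>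
        rw [Tval q j _ (Ua q (i+1)) (Va q (i+1)), Ga q (i+1) j] <;> push_cast <;> nlinarith
    · exact ⟨by rw [Rb1]; linarith, by rw [Rb2], by rw [Tb1, Gb1]; simp, by rw [Tb1, Gb1]; simp⟩
    · exact ⟨by rw [Rb3], by rw [Rb4]; linarith, by rw [Tb2, Gb2]; simp, by rw [Tb2, Gb2]; simp⟩
  · rintro ⟨h1, h2, h3, h4⟩
    have hqne : (q:ℝ) ≠ 0 := ne_of_gt hq0
    refine mem_hull_of_combo
      ![aPt q i, aPt q (i+1), bPt q j, bPt q (j+1)]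
      ![(((i:ℝ)+1) * TT q j x - (q:ℝ) * GG q j x)/q, ((q:ℝ) * GG q j x - (i:ℝ) * TT q j x)/q,
        RR q j x / q, RR q (j+3) x / q]
      ?_ ?_ ?_ ?_
    · intro k
      induction k using fin4cases <;> simp only [Matrix.cons_val_zero, Matrix.cons_val_one,
        Matrix.head_cons, Matrix.cons_val_two, Matrix.cons_val_three, Matrix.tail_cons]
      · exact div_nonneg (by linarith) hq0.le
      · exact div_nonneg (by linarith) hq0.le
      · exact div_nonneg h1 hq0.le
      · exact div_nonneg h2 hq0.le
    · simp only [Matrix.cons_val_zero, Matrix.cons_val_one, Matrix.head_cons,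
        Matrix.cons_val_two, Matrix.cons_val_three, Matrix.tail_cons]
      have hs := RsumT q j x
      field_simp
      linarith
    · intro k _
      induction k using fin4cases <;> simp
    · exact recon q i hqne j x



def Hset (q : ℤ) (x : Fin 3 → ℝ) : Prop :=
  0 ≤ x 0 ∧ 0 ≤ x 1 ∧ x 1 ≤ (q:ℝ) * x 2 ∧ x 0 + (q:ℝ) * x 2 ≤ 2*q

lemma convex_Hset (q : ℤ) : Convex ℝ {y : Fin 3 → ℝ | Hset q y} := by
  intro y hy z hz a b ha hb hab
  obtain ⟨h1, h2, h3, h4⟩ := hy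
  obtain ⟨g1, g2, g3, g4⟩ := hz
  refine ⟨?_, ?_, ?_, ?_⟩ <;>
    simp only [Pi.add_apply, Pi.smul_apply, smul_eq_mul] <;> nlinarith

lemma twoDelta_iff (q : ℤ) (hq : 2 ≤ q) (x : Fin 3 → ℝ) :
    x ∈ twoDelta q ↔ Hset q x := by
  have hq0 : (0:ℝ) < q := qpos q hq
  constructor
  · intro hx
    refine convexHull_min ?_ (convex_Hset q) hx
    rintro y (rfl | rfl | rfl | rfl) <;>
      refine ⟨?_, ?_, ?_, ?_⟩ <;> norm_num <;> nlinarith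
  · rintro ⟨h1, h2, h3, h4⟩
    have hqne : (q:ℝ) ≠ 0 := ne_of_gt hq0
    refine mem_hull_of_combo
      ![![0,0,0], ![2 * (q:ℝ), 0, 0], ![0,0,2], ![0, 2 * (q:ℝ), 2]]
      ![(2*(q:ℝ) - x 0 - (q:ℝ) * x 2)/(2*q), x 0/(2*(q:ℝ)),
        ((q:ℝ) * x 2 - x 1)/(2*(q:ℝ)), x 1/(2*(q:ℝ))] ?_ ?_ ?_ ?_
    · intro k
      induction k using fin4cases <;> simp only [Matrix.cons_val_zero, Matrix.cons_val_one,
        Matrix.head_cons, Matrix.cons_val_two, Matrix.cons_val_three, Matrix.tail_cons] <;>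
        exact div_nonneg (by linarith) (by linarith)
    · simp only [Matrix.cons_val_zero, Matrix.cons_val_one, Matrix.head_cons,
        Matrix.cons_val_two, Matrix.cons_val_three, Matrix.tail_cons]
      field_simp
      ring
    · intro k _
      induction k using fin4cases <;> simp
    · funext m
      induction m using fin3cases <;>
        · simp only [Pi.add_apply, Pi.smul_apply, smul_eq_mul, Matrix.cons_val_zero,
            Matrix.cons_val_one, Matrix.head_cons, Matrix.cons_val_two, Matrix.cons_val_three,
            Matrix.tail_cons]
          field_simp
          try ring

lemma HGT (q : ℤ) (hq : 2 ≤ q) (j : Fin 8) (x : Fin 3 → ℝ) (hx : Hset q x) :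
    0 ≤ GG q j x ∧ GG q j x ≤ TT q j x ∧ 0 ≤ TT q j x := by
  obtain ⟨h1, h2, h3, h4⟩ := hx
  induction j using fin8cases <;>
    · simp only [GG, TT, Uc, Vc]
      refine ⟨by linarith, by linarith, by linarith⟩

lemma cover_j (q : ℤ) (x : Fin 3 → ℝ) :
    ∃ j : Fin 8, 0 ≤ RR q j x ∧ 0 ≤ RR q (j + 3) x := by
  rcases le_total 0 (Uc q x) with hU | hU <;> rcases le_total 0 (Vc q x) with hV | hV
  · rcases le_total (Uc q x) (Vc q x) with h | h
    · exact ⟨5, by simp [RR]; linarith, by simp [RR]; linarith⟩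
    · exact ⟨6, by simp [RR]; linarith, by simp [RR]; linarith⟩
  · rcases le_total 0 (Uc q x + Vc q x) with h | h
    · exact ⟨7, by simp [RR]; linarith, by simp [RR]; linarith⟩
    · exact ⟨0, by simp [RR]; linarith, by simp [RR]; linarith⟩
  · rcases le_total 0 (Uc q x + Vc q x) with h | h
    · exact ⟨4, by simp [RR]; linarith, by simp [RR]; linarith⟩
    · exact ⟨3, by simp [RR]; linarith, by simp [RR]; linarith⟩
  · rcases le_total (Uc q x) (Vc q x) with h | h
    · exact ⟨2, by simp [RR]; linarith, by simp [RR]; linarith⟩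
    · exact ⟨1, by simp [RR]; linarith, by simp [RR]; linarith⟩

lemma cover_i (q : ℤ) (hq : 2 ≤ q) {G T : ℝ} (hG0 : 0 ≤ G) (hGT : G ≤ T) :
    ∃ i : ℤ, 0 ≤ i ∧ i ≤ q - 1 ∧ (i:ℝ) * T ≤ (q:ℝ) * G ∧ (q:ℝ) * G ≤ ((i:ℝ)+1) * T := by
  have hq0 : (0:ℝ) < q := qpos q hq
  have hT0 : 0 ≤ T := le_trans hG0 hGT
  rcases eq_or_lt_of_le hT0 with hT | hT
  · refine ⟨0, le_refl 0, by omega, ?_, ?_⟩ <;>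
      · have hG : G = 0 := le_antisymm (by linarith [hGT, hT.symm]) hG0
        rw [hG]
        norm_num [← hT]
  · set r : ℝ := (q:ℝ) * G / T with hr
    have hr0 : 0 ≤ r := div_nonneg (mul_nonneg hq0.le hG0) hT0
    have hrq : r ≤ (q:ℝ) := by
      rw [hr, div_le_iff₀ hT]
      nlinarith
    have hrT : r * T = (q:ℝ) * G := div_mul_cancel₀ _ (ne_of_gt hT)
    refine ⟨min ⌊r⌋ (q - 1), le_min (Int.floor_nonneg.mpr hr0) (by omega), min_le_right _ _,
      ?_, ?_⟩
    · have h1 : ((min ⌊r⌋ (q-1) : ℤ) : ℝ) ≤ r :=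
        le_trans (by exact_mod_cast Int.cast_le.mpr (min_le_left _ _)) (Int.floor_le r)
      nlinarith
    · rcases le_or_gt ⌊r⌋ (q - 1) with hc | hc
      · rw [min_eq_left hc]
        have h2 : r < (⌊r⌋ : ℝ) + 1 := Int.lt_floor_add_one r
        nlinarith
      · rw [min_eq_right (by omega : (q : ℤ) - 1 ≤ ⌊r⌋)]
        have h2 : (q:ℝ) ≤ r := by
          have : (q : ℤ) ≤ ⌊r⌋ := by omega
          exact le_trans (by exact_mod_cast this) (Int.floor_le r)
        have h3 : r = (q:ℝ) := le_antisymm hrq h2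
        push_cast
        nlinarith

lemma cover (q : ℤ) (hq : 2 ≤ q) (x : Fin 3 → ℝ) (hx : Hset q x) :
    ∃ (i : ℤ) (j : Fin 8), 0 ≤ i ∧ i ≤ q - 1 ∧ sysW q i j x := by
  obtain ⟨j, hj1, hj2⟩ := cover_j q x
  obtain ⟨hG0, hGT, _⟩ := HGT q hq j x hx
  obtain ⟨i, hi0, hi1, hc1, hc2⟩ := cover_i q hq hG0 hGT
  exact ⟨i, j, hi0, hi1, hj1, hj2, hc1, hc2⟩



set_option maxHeartbeats 1000000 in
lemma interior_strict (q i : ℤ) (hq : 2 ≤ q) (hi0 : 0 ≤ i) (hi1 : i ≤ q - 1) (j : Fin 8)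
    (x : Fin 3 → ℝ) (hx : x ∈ interior (tetra q i j)) :
    0 < RR q j x ∧ 0 < RR q (j + 3) x ∧
      (i : ℝ) * TT q j x < (q : ℝ) * GG q j x ∧
      (q : ℝ) * GG q j x < ((i : ℝ) + 1) * TT q j x := by
  have hq0 : (0:ℝ) < q := qpos q hq
  have hi0' : (0:ℝ) ≤ (i:ℝ) := by exact_mod_cast hi0
  have hi1' : (i:ℝ) ≤ (q:ℝ) - 1 := by
    have : (i:ℝ) ≤ ((q - 1 : ℤ) : ℝ) := by exact_mod_cast hi1
    push_cast at this; linarith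
  have key : ∀ (c : Fin 3 → ℝ) (d : ℝ) (k : Fin 3), c k ≠ 0 →
      (∀ y, sysW q i j y → 0 ≤ c 0 * y 0 + c 1 * y 1 + c 2 * y 2 + d) →
      0 < c 0 * x 0 + c 1 * x 1 + c 2 * x 2 + d := fun c d k hck hS' =>
    interior_aux k hck (fun y hy => hS' y ((mem_tetra_iff q i hq j y).mp hy)) hx
  clear hx
  induction j using fin8cases <;> refine ⟨?_, ?_, ?_, ?_⟩
  · have h := key ![1, 1, 0] (-(q:ℝ)) 0 (by norm_num <;> (intro hcon; nlinarith [hcon, hq0, hi0', hi1']))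
      (fun y hy => by
        have hh := hy.1
        simp only [RR, TT, GG, Uc, Vc, Fin.reduceAdd] at hh
        norm_num
        first | linarith [hh] | nlinarith [hh])
    norm_num at h
    simp only [RR, TT, GG, Uc, Vc, Fin.reduceAdd]
    first | linarith [h] | nlinarith [h]
  · have h := key ![(-1), (-1), (-(q:ℝ))] (2*(q:ℝ)) 0 (by norm_num <;> (intro hcon; nlinarith [hcon, hq0, hi0', hi1']))
      (fun y hy => by
        have hh := hy.2.1
        simp only [RR, TT, GG, Uc, Vc, Fin.reduceAdd] at hh
        norm_num
        first | linarith [hh] | nlinarith [hh])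
    norm_num at h
    simp only [RR, TT, GG, Uc, Vc, Fin.reduceAdd]
    first | linarith [h] | nlinarith [h]
  · have h := key ![0, (q:ℝ), (-((i:ℝ)*(q:ℝ)))] 0 1 (by norm_num <;> (intro hcon; nlinarith [hcon, hq0, hi0', hi1']))
      (fun y hy => by
        have hh := hy.2.2.1
        simp only [RR, TT, GG, Uc, Vc, Fin.reduceAdd] at hh
        norm_num
        first | linarith [hh] | nlinarith [hh])
    norm_num at h
    simp only [RR, TT, GG, Uc, Vc, Fin.reduceAdd]
    first | linarith [h] | nlinarith [h]
  · have h := key ![0, (-(q:ℝ)), (((i:ℝ)+1)*(q:ℝ))] 0 1 (by norm_num <;> (intro hcon; nlinarith [hcon, hq0, hi0', hi1']))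
      (fun y hy => by
        have hh := hy.2.2.2
        simp only [RR, TT, GG, Uc, Vc, Fin.reduceAdd] at hh
        norm_num
        first | linarith [hh] | nlinarith [hh])
    norm_num at h
    simp only [RR, TT, GG, Uc, Vc, Fin.reduceAdd]
    first | linarith [h] | nlinarith [h]
  · have h := key ![1, 1, (-(q:ℝ))] 0 0 (by norm_num <;> (intro hcon; nlinarith [hcon, hq0, hi0', hi1']))
      (fun y hy => by
        have hh := hy.1
        simp only [RR, TT, GG, Uc, Vc, Fin.reduceAdd] at hh
        norm_num
        first | linarith [hh] | nlinarith [hh])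
    norm_num at h
    simp only [RR, TT, GG, Uc, Vc, Fin.reduceAdd]
    first | linarith [h] | nlinarith [h]
  · have h := key ![(-1), (-1), 0] (q:ℝ) 0 (by norm_num <;> (intro hcon; nlinarith [hcon, hq0, hi0', hi1']))
      (fun y hy => by
        have hh := hy.2.1
        simp only [RR, TT, GG, Uc, Vc, Fin.reduceAdd] at hh
        norm_num
        first | linarith [hh] | nlinarith [hh])
    norm_num at h
    simp only [RR, TT, GG, Uc, Vc, Fin.reduceAdd]
    first | linarith [h] | nlinarith [h]
  · have h := key ![0, (q:ℝ), (-((i:ℝ)*(q:ℝ)))] 0 1 (by norm_num <;> (intro hcon; nlinarith [hcon, hq0, hi0', hi1']))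
      (fun y hy => by
        have hh := hy.2.2.1
        simp only [RR, TT, GG, Uc, Vc, Fin.reduceAdd] at hh
        norm_num
        first | linarith [hh] | nlinarith [hh])
    norm_num at h
    simp only [RR, TT, GG, Uc, Vc, Fin.reduceAdd]
    first | linarith [h] | nlinarith [h]
  · have h := key ![0, (-(q:ℝ)), (((i:ℝ)+1)*(q:ℝ))] 0 1 (by norm_num <;> (intro hcon; nlinarith [hcon, hq0, hi0', hi1']))
      (fun y hy => by
        have hh := hy.2.2.2
        simp only [RR, TT, GG, Uc, Vc, Fin.reduceAdd] at hh
        norm_num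
        first | linarith [hh] | nlinarith [hh])
    norm_num at h
    simp only [RR, TT, GG, Uc, Vc, Fin.reduceAdd]
    first | linarith [h] | nlinarith [h]
  · have h := key ![0, 0, (-(q:ℝ))] (q:ℝ) 2 (by norm_num <;> (intro hcon; nlinarith [hcon, hq0, hi0', hi1']))
      (fun y hy => by
        have hh := hy.1
        simp only [RR, TT, GG, Uc, Vc, Fin.reduceAdd] at hh
        norm_num
        first | linarith [hh] | nlinarith [hh])
    norm_num at h
    simp only [RR, TT, GG, Uc, Vc, Fin.reduceAdd]
    first | linarith [h] | nlinarith [h]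
  · have h := key ![(-1), (-1), (q:ℝ)] 0 0 (by norm_num <;> (intro hcon; nlinarith [hcon, hq0, hi0', hi1']))
      (fun y hy => by
        have hh := hy.2.1
        simp only [RR, TT, GG, Uc, Vc, Fin.reduceAdd] at hh
        norm_num
        first | linarith [hh] | nlinarith [hh])
    norm_num at h
    simp only [RR, TT, GG, Uc, Vc, Fin.reduceAdd]
    first | linarith [h] | nlinarith [h]
  · have h := key ![(-(i:ℝ)), ((q:ℝ)-(i:ℝ)), 0] 0 1 (by norm_num <;> (intro hcon; nlinarith [hcon, hq0, hi0', hi1']))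
      (fun y hy => by
        have hh := hy.2.2.1
        simp only [RR, TT, GG, Uc, Vc, Fin.reduceAdd] at hh
        norm_num
        first | linarith [hh] | nlinarith [hh])
    norm_num at h
    simp only [RR, TT, GG, Uc, Vc, Fin.reduceAdd]
    first | linarith [h] | nlinarith [h]
  · have h := key ![((i:ℝ)+1), ((i:ℝ)+1-(q:ℝ)), 0] 0 0 (by norm_num <;> (intro hcon; nlinarith [hcon, hq0, hi0', hi1']))
      (fun y hy => by
        have hh := hy.2.2.2
        simp only [RR, TT, GG, Uc, Vc, Fin.reduceAdd] at hh
        norm_num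
        first | linarith [hh] | nlinarith [hh])
    norm_num at h
    simp only [RR, TT, GG, Uc, Vc, Fin.reduceAdd]
    first | linarith [h] | nlinarith [h]
  · have h := key ![(-1), (-1), (-(q:ℝ))] (2*(q:ℝ)) 0 (by norm_num <;> (intro hcon; nlinarith [hcon, hq0, hi0', hi1']))
      (fun y hy => by
        have hh := hy.1
        simp only [RR, TT, GG, Uc, Vc, Fin.reduceAdd] at hh
        norm_num
        first | linarith [hh] | nlinarith [hh])
    norm_num at h
    simp only [RR, TT, GG, Uc, Vc, Fin.reduceAdd]
    first | linarith [h] | nlinarith [h]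
  · have h := key ![0, 0, (q:ℝ)] (-(q:ℝ)) 2 (by norm_num <;> (intro hcon; nlinarith [hcon, hq0, hi0', hi1']))
      (fun y hy => by
        have hh := hy.2.1
        simp only [RR, TT, GG, Uc, Vc, Fin.reduceAdd] at hh
        norm_num
        first | linarith [hh] | nlinarith [hh])
    norm_num at h
    simp only [RR, TT, GG, Uc, Vc, Fin.reduceAdd]
    first | linarith [h] | nlinarith [h]
  · have h := key ![(-(i:ℝ)), ((q:ℝ)-(i:ℝ)), 0] 0 1 (by norm_num <;> (intro hcon; nlinarith [hcon, hq0, hi0', hi1']))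
      (fun y hy => by
        have hh := hy.2.2.1
        simp only [RR, TT, GG, Uc, Vc, Fin.reduceAdd] at hh
        norm_num
        first | linarith [hh] | nlinarith [hh])
    norm_num at h
    simp only [RR, TT, GG, Uc, Vc, Fin.reduceAdd]
    first | linarith [h] | nlinarith [h]
  · have h := key ![((i:ℝ)+1), ((i:ℝ)+1-(q:ℝ)), 0] 0 0 (by norm_num <;> (intro hcon; nlinarith [hcon, hq0, hi0', hi1']))
      (fun y hy => by
        have hh := hy.2.2.2
        simp only [RR, TT, GG, Uc, Vc, Fin.reduceAdd] at hh
        norm_num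
        first | linarith [hh] | nlinarith [hh])
    norm_num at h
    simp only [RR, TT, GG, Uc, Vc, Fin.reduceAdd]
    first | linarith [h] | nlinarith [h]
  · have h := key ![(-1), (-1), 0] (q:ℝ) 0 (by norm_num <;> (intro hcon; nlinarith [hcon, hq0, hi0', hi1']))
      (fun y hy => by
        have hh := hy.1
        simp only [RR, TT, GG, Uc, Vc, Fin.reduceAdd] at hh
        norm_num
        first | linarith [hh] | nlinarith [hh])
    norm_num at h
    simp only [RR, TT, GG, Uc, Vc, Fin.reduceAdd]
    first | linarith [h] | nlinarith [h]
  · have h := key ![1, 1, (q:ℝ)] (-2*(q:ℝ)) 0 (by norm_num <;> (intro hcon; nlinarith [hcon, hq0, hi0', hi1']))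
      (fun y hy => by
        have hh := hy.2.1
        simp only [RR, TT, GG, Uc, Vc, Fin.reduceAdd] at hh
        norm_num
        first | linarith [hh] | nlinarith [hh])
    norm_num at h
    simp only [RR, TT, GG, Uc, Vc, Fin.reduceAdd]
    first | linarith [h] | nlinarith [h]
  · have h := key ![(-(q:ℝ)), 0, ((i:ℝ)*(q:ℝ)-(q:ℝ)*(q:ℝ))] (2*(q:ℝ)*(q:ℝ)-2*(i:ℝ)*(q:ℝ)) 0 (by norm_num <;> (intro hcon; nlinarith [hcon, hq0, hi0', hi1']))
      (fun y hy => by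
        have hh := hy.2.2.1
        simp only [RR, TT, GG, Uc, Vc, Fin.reduceAdd] at hh
        norm_num
        first | linarith [hh] | nlinarith [hh])
    norm_num at h
    simp only [RR, TT, GG, Uc, Vc, Fin.reduceAdd]
    first | linarith [h] | nlinarith [h]
  · have h := key ![(q:ℝ), 0, ((q:ℝ)*(q:ℝ)-((i:ℝ)+1)*(q:ℝ))] (2*((i:ℝ)+1)*(q:ℝ)-2*(q:ℝ)*(q:ℝ)) 0 (by norm_num <;> (intro hcon; nlinarith [hcon, hq0, hi0', hi1']))
      (fun y hy => by
        have hh := hy.2.2.2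
        simp only [RR, TT, GG, Uc, Vc, Fin.reduceAdd] at hh
        norm_num
        first | linarith [hh] | nlinarith [hh])
    norm_num at h
    simp only [RR, TT, GG, Uc, Vc, Fin.reduceAdd]
    first | linarith [h] | nlinarith [h]
  · have h := key ![(-1), (-1), (q:ℝ)] 0 0 (by norm_num <;> (intro hcon; nlinarith [hcon, hq0, hi0', hi1']))
      (fun y hy => by
        have hh := hy.1
        simp only [RR, TT, GG, Uc, Vc, Fin.reduceAdd] at hh
        norm_num
        first | linarith [hh] | nlinarith [hh])
    norm_num at h
    simp only [RR, TT, GG, Uc, Vc, Fin.reduceAdd]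
    first | linarith [h] | nlinarith [h]
  · have h := key ![1, 1, 0] (-(q:ℝ)) 0 (by norm_num <;> (intro hcon; nlinarith [hcon, hq0, hi0', hi1']))
      (fun y hy => by
        have hh := hy.2.1
        simp only [RR, TT, GG, Uc, Vc, Fin.reduceAdd] at hh
        norm_num
        first | linarith [hh] | nlinarith [hh])
    norm_num at h
    simp only [RR, TT, GG, Uc, Vc, Fin.reduceAdd]
    first | linarith [h] | nlinarith [h]
  · have h := key ![(-(q:ℝ)), 0, ((i:ℝ)*(q:ℝ)-(q:ℝ)*(q:ℝ))] (2*(q:ℝ)*(q:ℝ)-2*(i:ℝ)*(q:ℝ)) 0 (by norm_num <;> (intro hcon; nlinarith [hcon, hq0, hi0', hi1']))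
      (fun y hy => by
        have hh := hy.2.2.1
        simp only [RR, TT, GG, Uc, Vc, Fin.reduceAdd] at hh
        norm_num
        first | linarith [hh] | nlinarith [hh])
    norm_num at h
    simp only [RR, TT, GG, Uc, Vc, Fin.reduceAdd]
    first | linarith [h] | nlinarith [h]
  · have h := key ![(q:ℝ), 0, ((q:ℝ)*(q:ℝ)-((i:ℝ)+1)*(q:ℝ))] (2*((i:ℝ)+1)*(q:ℝ)-2*(q:ℝ)*(q:ℝ)) 0 (by norm_num <;> (intro hcon; nlinarith [hcon, hq0, hi0', hi1']))
      (fun y hy => by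
        have hh := hy.2.2.2
        simp only [RR, TT, GG, Uc, Vc, Fin.reduceAdd] at hh
        norm_num
        first | linarith [hh] | nlinarith [hh])
    norm_num at h
    simp only [RR, TT, GG, Uc, Vc, Fin.reduceAdd]
    first | linarith [h] | nlinarith [h]
  · have h := key ![0, 0, (q:ℝ)] (-(q:ℝ)) 2 (by norm_num <;> (intro hcon; nlinarith [hcon, hq0, hi0', hi1']))
      (fun y hy => by
        have hh := hy.1
        simp only [RR, TT, GG, Uc, Vc, Fin.reduceAdd] at hh
        norm_num
        first | linarith [hh] | nlinarith [hh])
    norm_num at h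
    simp only [RR, TT, GG, Uc, Vc, Fin.reduceAdd]
    first | linarith [h] | nlinarith [h]
  · have h := key ![1, 1, (-(q:ℝ))] 0 0 (by norm_num <;> (intro hcon; nlinarith [hcon, hq0, hi0', hi1']))
      (fun y hy => by
        have hh := hy.2.1
        simp only [RR, TT, GG, Uc, Vc, Fin.reduceAdd] at hh
        norm_num
        first | linarith [hh] | nlinarith [hh])
    norm_num at h
    simp only [RR, TT, GG, Uc, Vc, Fin.reduceAdd]
    first | linarith [h] | nlinarith [h]
  · have h := key ![((i:ℝ)-(q:ℝ)), (i:ℝ), (-((q:ℝ)*(q:ℝ)))] (2*(q:ℝ)*(q:ℝ)-2*(i:ℝ)*(q:ℝ)) 2 (by norm_num <;> (intro hcon; nlinarith [hcon, hq0, hi0', hi1']))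
      (fun y hy => by
        have hh := hy.2.2.1
        simp only [RR, TT, GG, Uc, Vc, Fin.reduceAdd] at hh
        norm_num
        first | linarith [hh] | nlinarith [hh])
    norm_num at h
    simp only [RR, TT, GG, Uc, Vc, Fin.reduceAdd]
    first | linarith [h] | nlinarith [h]
  · have h := key ![((q:ℝ)-(i:ℝ)-1), (-((i:ℝ)+1)), ((q:ℝ)*(q:ℝ))] (2*((i:ℝ)+1)*(q:ℝ)-2*((q:ℝ)*(q:ℝ))) 2 (by norm_num <;> (intro hcon; nlinarith [hcon, hq0, hi0', hi1']))
      (fun y hy => by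
        have hh := hy.2.2.2
        simp only [RR, TT, GG, Uc, Vc, Fin.reduceAdd] at hh
        norm_num
        first | linarith [hh] | nlinarith [hh])
    norm_num at h
    simp only [RR, TT, GG, Uc, Vc, Fin.reduceAdd]
    first | linarith [h] | nlinarith [h]
  · have h := key ![1, 1, (q:ℝ)] (-2*(q:ℝ)) 0 (by norm_num <;> (intro hcon; nlinarith [hcon, hq0, hi0', hi1']))
      (fun y hy => by
        have hh := hy.1
        simp only [RR, TT, GG, Uc, Vc, Fin.reduceAdd] at hh
        norm_num
        first | linarith [hh] | nlinarith [hh])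
    norm_num at h
    simp only [RR, TT, GG, Uc, Vc, Fin.reduceAdd]
    first | linarith [h] | nlinarith [h]
  · have h := key ![0, 0, (-(q:ℝ))] (q:ℝ) 2 (by norm_num <;> (intro hcon; nlinarith [hcon, hq0, hi0', hi1']))
      (fun y hy => by
        have hh := hy.2.1
        simp only [RR, TT, GG, Uc, Vc, Fin.reduceAdd] at hh
        norm_num
        first | linarith [hh] | nlinarith [hh])
    norm_num at h
    simp only [RR, TT, GG, Uc, Vc, Fin.reduceAdd]
    first | linarith [h] | nlinarith [h]
  · have h := key ![((i:ℝ)-(q:ℝ)), (i:ℝ), (-((q:ℝ)*(q:ℝ)))] (2*(q:ℝ)*(q:ℝ)-2*(i:ℝ)*(q:ℝ)) 2 (by norm_num <;> (intro hcon; nlinarith [hcon, hq0, hi0', hi1']))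
      (fun y hy => by
        have hh := hy.2.2.1
        simp only [RR, TT, GG, Uc, Vc, Fin.reduceAdd] at hh
        norm_num
        first | linarith [hh] | nlinarith [hh])
    norm_num at h
    simp only [RR, TT, GG, Uc, Vc, Fin.reduceAdd]
    first | linarith [h] | nlinarith [h]
  · have h := key ![((q:ℝ)-(i:ℝ)-1), (-((i:ℝ)+1)), ((q:ℝ)*(q:ℝ))] (2*((i:ℝ)+1)*(q:ℝ)-2*((q:ℝ)*(q:ℝ))) 2 (by norm_num <;> (intro hcon; nlinarith [hcon, hq0, hi0', hi1']))
      (fun y hy => by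
        have hh := hy.2.2.2
        simp only [RR, TT, GG, Uc, Vc, Fin.reduceAdd] at hh
        norm_num
        first | linarith [hh] | nlinarith [hh])
    norm_num at h
    simp only [RR, TT, GG, Uc, Vc, Fin.reduceAdd]
    first | linarith [h] | nlinarith [h]



lemma Tnn (q i : ℤ) (j : Fin 8) (x : Fin 3 → ℝ) (hx : sysW q i j x) : 0 ≤ TT q j x := by
  have h3 := hx.2.2.1
  have h4 := hx.2.2.2
  nlinarith [h3, h4]

lemma TGcom (q i i' : ℤ) (j j' : Fin 8) (x : Fin 3 → ℝ)
    (hx : sysW q i j x) (hx' : sysW q i' j' x) :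
    TT q j' x = TT q j x ∧ GG q j' x = GG q j x := by
  by_cases h0 : j' = j
  · subst h0; exact ⟨rfl, rfl⟩
  by_cases h1 : j' = j + 1
  · subst h1
    exact TGeq q j x (adjR q j x hx.1 hx'.2.1)
  by_cases h2 : j = j' + 1
  · have hr : RR q j' x = 0 := by
      refine adjR q j' x hx'.1 ?_
      rw [← h2]; exact hx.2.1
    have h := TGeq q j' x hr
    rw [h2]
    exact ⟨h.1.symm, h.2.symm⟩
  · have far := farUV q j j' x h0 h1 h2 hx.1 hx.2.1 hx'.1 hx'.2.1
    rw [Tval q j x far.1 far.2, Tval q j' x far.1 far.2,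
      Gval q j x far.1 far.2, Gval q j' x far.1 far.2]
    exact ⟨rfl, rfl⟩

lemma force (q i i' : ℤ) (hq : 2 ≤ q) (j j' : Fin 8) (x : Fin 3 → ℝ)
    (hx : sysW q i j x) (hx' : sysW q i' j' x) :
    (RR q j x ≠ 0 → j = j' ∨ j = j' + 1) ∧
    (RR q (j + 3) x ≠ 0 → j + 1 = j' ∨ j + 1 = j' + 1) ∧
    ((((i:ℝ) + 1) * TT q j x - (q:ℝ) * GG q j x ≠ 0) → i = i' ∨ i = i' + 1) ∧
    (((q:ℝ) * GG q j x - (i:ℝ) * TT q j x ≠ 0) → i + 1 = i' ∨ i + 1 = i' + 1) := by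
  have hq0 : (0:ℝ) < q := qpos q hq
  have hT0 : 0 ≤ TT q j x := Tnn q i j x hx
  obtain ⟨hTG1, hTG2⟩ := TGcom q i i' j j' x hx hx'
  have hc1 := hx.2.2.1
  have hc2 := hx.2.2.2
  have hc1' := hx'.2.2.1
  have hc2' := hx'.2.2.2
  rw [hTG1, hTG2] at hc1' hc2'
  refine ⟨?_, ?_, ?_, ?_⟩
  · intro hR
    by_contra hcon
    push_neg at hcon
    obtain ⟨hA, hB⟩ := hcon
    apply hR
    by_cases hjj : j' = j + 1
    · exact adjR q j x hx.1 (by rw [← hjj]; exact hx'.2.1)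
    · have far := farUV q j j' x (fun h => hA h.symm) hjj hB hx.1 hx.2.1 hx'.1 hx'.2.1
      exact Rzero q j x far.1 far.2
  · intro hR
    by_contra hcon
    push_neg at hcon
    obtain ⟨hA, hB⟩ := hcon
    apply hR
    by_cases hjj : j = j' + 1
    · have e : (j + 3 : Fin 8) = j' + 4 := by rw [hjj, add_assoc]; rfl
      rw [e, Rneg]
      have hx2 := hx.2.1
      rw [e, Rneg] at hx2
      have := hx'.1
      linarith
    · have hj'j : j' ≠ j := fun h => hB (by rw [h])
      have hj'j1 : j' ≠ j + 1 := fun h => hA h.symm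
      have far := farUV q j j' x hj'j hj'j1 hjj hx.1 hx.2.1 hx'.1 hx'.2.1
      exact Rzero q (j + 3) x far.1 far.2
  · intro hR
    by_contra hcon
    push_neg at hcon
    obtain ⟨hA, hB⟩ := hcon
    apply hR
    rcases lt_trichotomy i i' with h | h | h
    · have hii : i + 1 ≤ i' := by omega
      have hii' : (i:ℝ) + 1 ≤ (i':ℝ) := by exact_mod_cast hii
      nlinarith [mul_nonneg (by linarith : (0:ℝ) ≤ (i':ℝ) - (i:ℝ) - 1) hT0]
    · exact absurd h hA
    · have hii : i' + 2 ≤ i := by omega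
      have hii' : (i':ℝ) + 2 ≤ (i:ℝ) := by exact_mod_cast hii
      have hTz : TT q j x ≤ 0 := by
        nlinarith [mul_nonneg (by linarith : (0:ℝ) ≤ (i:ℝ) - (i':ℝ) - 1) hT0]
      have hT : TT q j x = 0 := le_antisymm hTz hT0
      rw [hT] at hc1 hc2 ⊢
      have hi0'' : (0:ℝ) ≤ (i:ℝ) * 0 := by norm_num
      nlinarith [hc1, hc2]
  · intro hR
    by_contra hcon
    push_neg at hcon
    obtain ⟨hA, hB⟩ := hcon
    apply hR
    have hBi : i ≠ i' := fun h => hB (by rw [h])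
    rcases lt_trichotomy i i' with h | h | h
    · have hii : i + 2 ≤ i' := by omega
      have hii' : (i:ℝ) + 2 ≤ (i':ℝ) := by exact_mod_cast hii
      have hTz : TT q j x ≤ 0 := by
        nlinarith [mul_nonneg (by linarith : (0:ℝ) ≤ (i':ℝ) - (i:ℝ) - 1) hT0]
      have hT : TT q j x = 0 := le_antisymm hTz hT0
      rw [hT] at hc1 hc2 ⊢
      nlinarith [hc1, hc2]
    · exact absurd h hBi
    · have hii : i' + 1 ≤ i := by omega
      have hii' : (i':ℝ) + 1 ≤ (i:ℝ) := by exact_mod_cast hii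
      nlinarith [mul_nonneg (by linarith : (0:ℝ) ≤ (i:ℝ) - (i':ℝ) - 1) hT0]



lemma range_fin4 (a b c d : Fin 3 → ℝ) :
    Set.range ![a, b, c, d] = {a, b, c, d} := by
  ext y
  constructor
  · rintro ⟨k, rfl⟩
    induction k using fin4cases <;> simp
  · rintro (rfl | rfl | rfl | rfl)
    exacts [⟨0, rfl⟩, ⟨1, rfl⟩, ⟨2, rfl⟩, ⟨3, rfl⟩]

lemma hull_range_eq (q i : ℤ) (j : Fin 8) :
    convexHull ℝ (Set.range ![aPt q i, aPt q (i+1), bPt q j, bPt q (j+1)]) = tetra q i j := by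
  rw [range_fin4]; rfl

lemma hull_inter (q i i' : ℤ) (hq : 2 ≤ q) (j j' : Fin 8) (x : Fin 3 → ℝ)
    (hx : x ∈ tetra q i j) (hx' : x ∈ tetra q i' j') :
    x ∈ convexHull ℝ (Set.range ![aPt q i, aPt q (i+1), bPt q j, bPt q (j+1)] ∩
      Set.range ![aPt q i', aPt q (i'+1), bPt q j', bPt q (j'+1)]) := by
  have hq0 : (0:ℝ) < q := qpos q hq
  have hqne : (q:ℝ) ≠ 0 := ne_of_gt hq0
  rw [mem_tetra_iff q i hq j x] at hx
  rw [mem_tetra_iff q i' hq j' x] at hx'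
  obtain ⟨F1, F2, F3, F4⟩ := force q i i' hq j j' x hx hx'
  refine mem_hull_of_combo
    ![aPt q i, aPt q (i+1), bPt q j, bPt q (j+1)]
    ![(((i:ℝ)+1) * TT q j x - (q:ℝ) * GG q j x)/q, ((q:ℝ) * GG q j x - (i:ℝ) * TT q j x)/q,
      RR q j x / q, RR q (j+3) x / q]
    ?_ ?_ ?_ (recon q i hqne j x)
  · intro k
    induction k using fin4cases <;> simp only [Matrix.cons_val_zero, Matrix.cons_val_one,
      Matrix.head_cons, Matrix.cons_val_two, Matrix.cons_val_three, Matrix.tail_cons]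
    · exact div_nonneg (by linarith [hx.2.2.2]) hq0.le
    · exact div_nonneg (by linarith [hx.2.2.1]) hq0.le
    · exact div_nonneg hx.1 hq0.le
    · exact div_nonneg hx.2.1 hq0.le
  · simp only [Matrix.cons_val_zero, Matrix.cons_val_one, Matrix.head_cons,
      Matrix.cons_val_two, Matrix.cons_val_three, Matrix.tail_cons]
    have hs := RsumT q j x
    field_simp
    linarith
  · intro k hk
    induction k using fin4cases <;> simp only [Matrix.cons_val_zero, Matrix.cons_val_one,
      Matrix.head_cons, Matrix.cons_val_two, Matrix.cons_val_three, Matrix.tail_cons] at hk ⊢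
    · have hnum : ((i:ℝ)+1) * TT q j x - (q:ℝ) * GG q j x ≠ 0 := by
        intro h; exact hk (by rw [h, zero_div])
      refine ⟨⟨0, rfl⟩, ?_⟩
      rcases F3 hnum with h | h
      · exact ⟨0, by rw [h]; rfl⟩
      · exact ⟨1, by rw [h]; rfl⟩
    · have hnum : (q:ℝ) * GG q j x - (i:ℝ) * TT q j x ≠ 0 := by
        intro h; exact hk (by rw [h, zero_div])
      refine ⟨⟨1, rfl⟩, ?_⟩
      rcases F4 hnum with h | h
      · exact ⟨0, by rw [h]; rfl⟩
      · exact ⟨1, by rw [h]; rfl⟩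
    · have hnum : RR q j x ≠ 0 := by
        intro h; exact hk (by rw [h, zero_div])
      refine ⟨⟨2, rfl⟩, ?_⟩
      rcases F1 hnum with h | h
      · exact ⟨2, by rw [h]; rfl⟩
      · exact ⟨3, by rw [h]; rfl⟩
    · have hnum : RR q (j+3) x ≠ 0 := by
        intro h; exact hk (by rw [h, zero_div])
      refine ⟨⟨3, rfl⟩, ?_⟩
      rcases F2 hnum with h | h
      · exact ⟨2, by rw [h]; rfl⟩
      · exact ⟨3, by rw [h]; rfl⟩

lemma disjoint_interiors (q i i' : ℤ) (hq : 2 ≤ q) (hi0 : 0 ≤ i) (hi1 : i ≤ q - 1)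
    (hi0' : 0 ≤ i') (hi1' : i' ≤ q - 1) (j j' : Fin 8) (hne : i ≠ i' ∨ j ≠ j') :
    interior (tetra q i j) ∩ interior (tetra q i' j') = ∅ := by
  rw [Set.eq_empty_iff_forall_notMem]
  rintro x ⟨hx, hx'⟩
  obtain ⟨S1, S2, S3, S4⟩ := interior_strict q i hq hi0 hi1 j x hx
  obtain ⟨S1', S2', S3', S4'⟩ := interior_strict q i' hq hi0' hi1' j' x hx'
  by_cases hjj : j = j'
  · subst hjj
    have hii : i ≠ i' := by tauto
    have hT0 : (0:ℝ) < TT q j x := by linarith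
    rcases lt_trichotomy i i' with h | h | h
    · have hii2 : (i:ℝ) + 1 ≤ (i':ℝ) := by exact_mod_cast (by omega : i + 1 ≤ i')
      nlinarith [mul_nonneg (by linarith : (0:ℝ) ≤ (i':ℝ) - (i:ℝ) - 1) hT0.le]
    · exact hii h
    · have hii2 : (i':ℝ) + 1 ≤ (i:ℝ) := by exact_mod_cast (by omega : i' + 1 ≤ i)
      nlinarith [mul_nonneg (by linarith : (0:ℝ) ≤ (i:ℝ) - (i':ℝ) - 1) hT0.le]
  · by_cases h1 : j' = j + 1
    · have := adjR q j x S1.le (by rw [← h1]; exact S2'.le)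
      linarith
    · by_cases h2 : j = j' + 1
      · have := adjR q j' x S1'.le (by rw [← h2]; exact S2.le)
        linarith
      · have far := farUV q j j' x (fun h => hjj h.symm) h1 h2 S1.le S2.le S1'.le S2'.le
        have := Rzero q j x far.1 far.2
        linarith



lemma detval (q i : ℤ) (hq : 2 ≤ q) (j : Fin 8) :
    |Matrix.det (Matrix.of
      ![aPt q (i + 1) - aPt q i, bPt q j - aPt q i, bPt q (j + 1) - aPt q i])| = (q : ℝ) := by
  have hq0 : (0:ℝ) < q := qpos q hq
  have hdet : Matrix.det (Matrix.of
      ![aPt q (i + 1) - aPt q i, bPt q j - aPt q i, bPt q (j + 1) - aPt q i]) = (q : ℝ) := by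
    induction j using fin8cases <;>
      · rw [Matrix.det_fin_three]
        simp only [Matrix.of_apply, Matrix.cons_val_zero, Matrix.cons_val_one,
          Matrix.head_cons, Matrix.cons_val_two, Matrix.tail_cons, Pi.sub_apply,
          aPt, bPt_0, bPt_1, bPt_2, bPt_3, bPt_4, bPt_5, bPt_6, bPt_7, Fin.reduceAdd]
        push_cast
        ring
  rw [hdet, abs_of_pos hq0]

lemma aPt_mem (q n : ℤ) : aPt q n ∈ lambdaOneQ q := by
  refine ⟨1 - n, 0, 1, n, ?_⟩
  funext m
  induction m using fin3cases <;>
    · simp only [aPt, Matrix.cons_val_zero, Matrix.cons_val_one, Matrix.head_cons,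
        Matrix.cons_val_two, Matrix.tail_cons]
      push_cast
      ring

lemma bPt_mem (q : ℤ) (j : Fin 8) : bPt q j ∈ lambdaOneQ q := by
  have tac : ∀ (a b c m : ℤ) (v : Fin 3 → ℝ),
      (v 0 = (q:ℝ) * a + m * ((q:ℝ) - 1)) → (v 1 = (q:ℝ) * b + m) → (v 2 = (c:ℝ)) →
      v ∈ lambdaOneQ q := by
    intro a b c m v h0 h1 h2
    refine ⟨a, b, c, m, ?_⟩
    funext k
    induction k using fin3cases <;> simp only [Matrix.cons_val_zero, Matrix.cons_val_one,
      Matrix.head_cons, Matrix.cons_val_two, Matrix.tail_cons, h0, h1, h2]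
  induction j using fin8cases
  · exact tac 2 0 0 0 _ (by simp only [bPt_0, Matrix.cons_val_zero, Matrix.cons_val_one, Matrix.head_cons, Matrix.cons_val_two, Matrix.tail_cons]; push_cast; ring) (by simp only [bPt_0, Matrix.cons_val_zero, Matrix.cons_val_one, Matrix.head_cons, Matrix.cons_val_two, Matrix.tail_cons]; push_cast; ring) (by simp only [bPt_0, Matrix.cons_val_zero, Matrix.cons_val_one, Matrix.head_cons, Matrix.cons_val_two, Matrix.tail_cons]; push_cast; ring)
  · exact tac 1 0 0 0 _ (by simp only [bPt_1, Matrix.cons_val_zero, Matrix.cons_val_one, Matrix.head_cons, Matrix.cons_val_two, Matrix.tail_cons]; push_cast; ring) (by simp only [bPt_1, Matrix.cons_val_zero, Matrix.cons_val_one, Matrix.head_cons, Matrix.cons_val_two, Matrix.tail_cons]; push_cast; ring) (by simp only [bPt_1, Matrix.cons_val_zero, Matrix.cons_val_one, Matrix.head_cons, Matrix.cons_val_two, Matrix.tail_cons]; push_cast; ring)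
  · exact tac 0 0 0 0 _ (by simp only [bPt_2, Matrix.cons_val_zero, Matrix.cons_val_one, Matrix.head_cons, Matrix.cons_val_two, Matrix.tail_cons]; push_cast; ring) (by simp only [bPt_2, Matrix.cons_val_zero, Matrix.cons_val_one, Matrix.head_cons, Matrix.cons_val_two, Matrix.tail_cons]; push_cast; ring) (by simp only [bPt_2, Matrix.cons_val_zero, Matrix.cons_val_one, Matrix.head_cons, Matrix.cons_val_two, Matrix.tail_cons]; push_cast; ring)
  · exact tac 0 0 1 0 _ (by simp only [bPt_3, Matrix.cons_val_zero, Matrix.cons_val_one, Matrix.head_cons, Matrix.cons_val_two, Matrix.tail_cons]; push_cast; ring) (by simp only [bPt_3, Matrix.cons_val_zero, Matrix.cons_val_one, Matrix.head_cons, Matrix.cons_val_two, Matrix.tail_cons]; push_cast; ring) (by simp only [bPt_3, Matrix.cons_val_zero, Matrix.cons_val_one, Matrix.head_cons, Matrix.cons_val_two, Matrix.tail_cons]; push_cast; ring)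
  · exact tac 0 0 2 0 _ (by simp only [bPt_4, Matrix.cons_val_zero, Matrix.cons_val_one, Matrix.head_cons, Matrix.cons_val_two, Matrix.tail_cons]; push_cast; ring) (by simp only [bPt_4, Matrix.cons_val_zero, Matrix.cons_val_one, Matrix.head_cons, Matrix.cons_val_two, Matrix.tail_cons]; push_cast; ring) (by simp only [bPt_4, Matrix.cons_val_zero, Matrix.cons_val_one, Matrix.head_cons, Matrix.cons_val_two, Matrix.tail_cons]; push_cast; ring)
  · exact tac (1 - q) 0 2 q _ (by simp only [bPt_5, Matrix.cons_val_zero, Matrix.cons_val_one, Matrix.head_cons, Matrix.cons_val_two, Matrix.tail_cons]; push_cast; ring) (by simp only [bPt_5, Matrix.cons_val_zero, Matrix.cons_val_one, Matrix.head_cons, Matrix.cons_val_two, Matrix.tail_cons]; push_cast; ring)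
      (by simp only [bPt_5, Matrix.cons_val_zero, Matrix.cons_val_one, Matrix.head_cons, Matrix.cons_val_two, Matrix.tail_cons]; push_cast; ring)
  · exact tac 0 2 2 0 _ (by simp only [bPt_6, Matrix.cons_val_zero, Matrix.cons_val_one, Matrix.head_cons, Matrix.cons_val_two, Matrix.tail_cons]; push_cast; ring) (by simp only [bPt_6, Matrix.cons_val_zero, Matrix.cons_val_one, Matrix.head_cons, Matrix.cons_val_two, Matrix.tail_cons]; push_cast; ring) (by simp only [bPt_6, Matrix.cons_val_zero, Matrix.cons_val_one, Matrix.head_cons, Matrix.cons_val_two, Matrix.tail_cons]; push_cast; ring)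
  · exact tac (2 - q) 0 1 q _ (by simp only [bPt_7, Matrix.cons_val_zero, Matrix.cons_val_one, Matrix.head_cons, Matrix.cons_val_two, Matrix.tail_cons]; push_cast; ring) (by simp only [bPt_7, Matrix.cons_val_zero, Matrix.cons_val_one, Matrix.head_cons, Matrix.cons_val_two, Matrix.tail_cons]; push_cast; ring)
      (by simp only [bPt_7, Matrix.cons_val_zero, Matrix.cons_val_one, Matrix.head_cons, Matrix.cons_val_two, Matrix.tail_cons]; push_cast; ring)

lemma bH (q : ℤ) (hq : 2 ≤ q) (j : Fin 8) : Hset q (bPt q j) := by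
  have hq0 : (0:ℝ) < q := qpos q hq
  induction j using fin8cases <;>
    · refine ⟨?_, ?_, ?_, ?_⟩ <;>
        · simp only [Hset, bPt_0, bPt_1, bPt_2, bPt_3, bPt_4, bPt_5, bPt_6, bPt_7,
            Matrix.cons_val_zero, Matrix.cons_val_one, Matrix.head_cons,
            Matrix.cons_val_two, Matrix.tail_cons]
          linarith

lemma tetra_sub (q : ℤ) (hq : 2 ≤ q) (i : ℤ) (hi0 : 0 ≤ i) (hi1 : i ≤ q - 1) (j : Fin 8) :
    tetra q i j ⊆ twoDelta q := by
  have hq0 : (0:ℝ) < q := qpos q hq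
  have hi0' : (0:ℝ) ≤ (i:ℝ) := by exact_mod_cast hi0
  have hi1' : (i:ℝ) ≤ (q:ℝ) - 1 := by
    have : (i:ℝ) ≤ ((q - 1 : ℤ) : ℝ) := by exact_mod_cast hi1
    push_cast at this; linarith
  refine convexHull_min ?_ (convex_convexHull ℝ _)
  rintro y (rfl | rfl | rfl | rfl) <;> rw [twoDelta_iff q hq]
  · refine ⟨?_, ?_, ?_, ?_⟩ <;>
      · simp only [aPt, Matrix.cons_val_zero, Matrix.cons_val_one, Matrix.head_cons,
          Matrix.cons_val_two, Matrix.tail_cons]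
        linarith
  · refine ⟨?_, ?_, ?_, ?_⟩ <;>
      · simp only [aPt, Matrix.cons_val_zero, Matrix.cons_val_one, Matrix.head_cons,
          Matrix.cons_val_two, Matrix.tail_cons]
        push_cast
        linarith
  · exact bH q hq j
  · exact bH q hq (j + 1)


end TriAux
open TriAux in
/-- The `8q` tetrahedra `conv{a_i, a_{i+1}, b_j, b_{j+1}}`,
`0 ≤ i ≤ q-1`, `j ∈ ℤ/8`, have pairwise disjoint interiors, cover `2Δ'(1,q)`, and
each is unimodular with respect to `Λ_{1,q}` (the determinant of its edge vectors
has absolute value `q`, the covolume of the lattice); hence `2Δ'(1,q)` has a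
unimodular triangulation with respect to `Λ_{1,q}`. -/
theorem two_dilated_tetragonal_unimodular_triangulation
    (q : ℤ) (hq : 2 ≤ q) :
    (∀ i i' : ℤ, 0 ≤ i → i ≤ q - 1 → 0 ≤ i' → i' ≤ q - 1 → ∀ j j' : Fin 8,
      (i ≠ i' ∨ j ≠ j') → interior (tetra q i j) ∩ interior (tetra q i' j') = ∅) ∧
    ({x : Fin 3 → ℝ | ∃ (i : ℤ) (j : Fin 8), 0 ≤ i ∧ i ≤ q - 1 ∧ x ∈ tetra q i j} =
      twoDelta q) ∧
    (∀ i : ℤ, 0 ≤ i → i ≤ q - 1 → ∀ j : Fin 8,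
      |Matrix.det (Matrix.of
        ![aPt q (i + 1) - aPt q i, bPt q j - aPt q i, bPt q (j + 1) - aPt q i])| = (q : ℝ)) ∧
    ∃ T : Finset (Fin 4 → (Fin 3 → ℝ)),
      (∀ s ∈ T, ∀ k : Fin 4, s k ∈ lambdaOneQ q) ∧
      (⋃ s ∈ T, convexHull ℝ (Set.range s)) = twoDelta q ∧
      (∀ s ∈ T, ∀ s' ∈ T, convexHull ℝ (Set.range s) ∩ convexHull ℝ (Set.range s') =
        convexHull ℝ (Set.range s ∩ Set.range s')) ∧
      (∀ s ∈ T, |Matrix.det (Matrix.of ![s 1 - s 0, s 2 - s 0, s 3 - s 0])| = (q : ℝ)) := by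
  refine ⟨?_, ?_, ?_, ?_⟩
  · intro i i' h0 h1 h0' h1' j j' hne
    exact disjoint_interiors q i i' hq h0 h1 h0' h1' j j' hne
  · ext x
    simp only [Set.mem_setOf_eq]
    constructor
    · rintro ⟨i, j, hi0, hi1, hx⟩
      exact tetra_sub q hq i hi0 hi1 j hx
    · intro hx
      obtain ⟨i, j, h1, h2, h3⟩ := cover q hq x ((twoDelta_iff q hq x).mp hx)
      exact ⟨i, j, h1, h2, (mem_tetra_iff q i hq j x).mpr h3⟩
  · intro i _ _ j
    exact detval q i hq j
  · refine ⟨(Finset.Icc 0 (q-1) ×ˢ (Finset.univ : Finset (Fin 8))).image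
      (fun p : ℤ × Fin 8 => ![aPt q p.1, aPt q (p.1 + 1), bPt q p.2, bPt q (p.2 + 1)]),
      ?_, ?_, ?_, ?_⟩
    · intro s hs k
      simp only [Finset.mem_image] at hs
      obtain ⟨p, _, rfl⟩ := hs
      induction k using fin4cases <;>
        first
          | exact aPt_mem q p.1
          | exact aPt_mem q (p.1 + 1)
          | exact bPt_mem q p.2
          | exact bPt_mem q (p.2 + 1)
    · ext x
      simp only [Set.mem_iUnion, exists_prop, Finset.mem_image, Finset.mem_product,
        Finset.mem_Icc, Finset.mem_univ, and_true]
      constructor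
      · rintro ⟨s, ⟨⟨pi, pj⟩, ⟨hp0, hp1⟩, rfl⟩, hx⟩
        rw [hull_range_eq] at hx
        exact tetra_sub q hq pi hp0 hp1 pj hx
      · intro hx
        obtain ⟨i, j, h1, h2, h3⟩ := cover q hq x ((twoDelta_iff q hq x).mp hx)
        refine ⟨![aPt q i, aPt q (i + 1), bPt q j, bPt q (j + 1)], ⟨(i, j), ⟨h1, h2⟩, rfl⟩, ?_⟩
        rw [hull_range_eq]
        exact (mem_tetra_iff q i hq j x).mpr h3
    · intro s hs s' hs'
      simp only [Finset.mem_image] at hs hs'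
      obtain ⟨⟨pi, pj⟩, _, rfl⟩ := hs
      obtain ⟨⟨pi', pj'⟩, _, rfl⟩ := hs'
      apply Set.Subset.antisymm
      · rintro x ⟨hx, hx'⟩
        rw [hull_range_eq] at hx hx'
        exact hull_inter q pi pi' hq pj pj' x hx hx'
      · exact Set.subset_inter (convexHull_mono Set.inter_subset_left)
          (convexHull_mono Set.inter_subset_right)
    · intro s hs
      simp only [Finset.mem_image] at hs
      obtain ⟨⟨pi, pj⟩, _, rfl⟩ := hs
      exact detval q pi hq pj
end
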